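/- arXiv:2504.18224 — 13 statements merged into one kernel-verified Lean document; each statement's English description precedes it below -/
import Mathlib

section
/- For any nontrivial ring R and any n ≥ 3, the ring Sₙ(R) of n×n upper triangular matrices over R with constant diagonal is not weakly reversible. -/
def IsReversibleElem {R : Type*} [Ring R] (a : R) : Prop :=
  ∀ b : R, b * a = 0 ↔ a * b = 0

def WeaklyReversible (R : Type*) [Ring R] : Prop :=
  ∀ a : R, a ≠ 0 → ∃ m : ℕ, 0 < m ∧ a ^ m ≠ 0 ∧ IsReversibleElem (a ^ m)

/-- `Sₙ(R)`: the subring of `n × n` upper triangular matrices over `R` all of whose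
diagonal entries are equal. -/
def SnSubring (n : ℕ) (R : Type*) [Ring R] : Subring (Matrix (Fin n) (Fin n) R) where
  carrier := {M | (∀ i j, j < i → M i j = 0) ∧ ∀ i j, M i i = M j j}
  zero_mem' := ⟨fun _ _ _ => rfl, fun _ _ => rfl⟩
  one_mem' := ⟨fun i j h => Matrix.one_apply_ne (Ne.symm (ne_of_lt h)),
    fun i j => by simp [Matrix.one_apply]⟩
  add_mem' := fun {A B} hA hB =>
    ⟨fun i j h => by simp [Matrix.add_apply, hA.1 i j h, hB.1 i j h],
     fun i j => by simp [Matrix.add_apply, hA.2 i j, hB.2 i j]⟩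
  neg_mem' := fun {A} hA =>
    ⟨fun i j h => by simp [Matrix.neg_apply, hA.1 i j h],
     fun i j => by simp [Matrix.neg_apply, hA.2 i j]⟩
  mul_mem' := fun {A B} hA hB => by
    constructor
    · intro i j h
      rw [Matrix.mul_apply]
      refine Finset.sum_eq_zero fun k _ => ?_
      rcases lt_or_ge k i with hk | hk
      · rw [hA.1 i k hk, zero_mul]
      · rw [hB.1 k j (lt_of_lt_of_le h hk), mul_zero]
    · have key : ∀ i : Fin n, (A * B) i i = A i i * B i i := by
        intro i
        rw [Matrix.mul_apply]
        refine Finset.sum_eq_single i (fun k _ hk => ?_) (by simp)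
        rcases lt_or_ge k i with hk' | hk'
        · rw [hA.1 i k hk', zero_mul]
        · rw [hB.1 k i (lt_of_le_of_ne hk' (Ne.symm hk)), mul_zero]
      intro i j
      rw [key i, key j, hA.2 i j, hB.2 i j]


lemma std_mem {R : Type*} [Ring R] {n : ℕ} (i j : Fin n) (hij : i < j) (c : R) :
    Matrix.single i j c ∈ SnSubring n R := by
  constructor
  · intro a b hba
    apply Matrix.single_apply_of_ne
    rintro ⟨rfl, rfl⟩
    exact absurd (hba.trans hij) (lt_irrefl _)
  · intro a b
    rw [Matrix.single_apply_of_ne, Matrix.single_apply_of_ne]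
    · rintro ⟨rfl, rfl⟩; exact absurd hij (lt_irrefl _)
    · rintro ⟨rfl, rfl⟩; exact absurd hij (lt_irrefl _)

/-- For a nontrivial ring `R` and `n ≥ 3`, the ring `Sₙ(R)` is not weakly reversible. -/
theorem stmt_2 (R : Type*) [Ring R] [Nontrivial R] (n : ℕ) (hn : 3 ≤ n) :
    ¬ WeaklyReversible (SnSubring n R) := by
  intro h
  set i0 : Fin n := ⟨0, by omega⟩ with hi0
  set i1 : Fin n := ⟨1, by omega⟩ with hi1
  set i2 : Fin n := ⟨2, by omega⟩ with hi2
  have h01 : i0 < i1 := by simp [hi0, hi1, Fin.lt_def]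
  have h12 : i1 < i2 := by simp [hi1, hi2, Fin.lt_def]
  have h02 : i0 < i2 := h01.trans h12
  set a : SnSubring n R := ⟨Matrix.single i0 i1 (1:R), std_mem i0 i1 h01 1⟩ with ha
  set b : SnSubring n R := ⟨Matrix.single i1 i2 (1:R), std_mem i1 i2 h12 1⟩ with hb
  have ha0 : a ≠ 0 := by
    intro hz
    have : (a : Matrix (Fin n) (Fin n) R) i0 i1 = 0 := by rw [hz]; rfl
    rw [ha] at this
    simp [Matrix.single_apply_same] at this
  have hasq : a * a = 0 := by
    apply Subtype.ext
    show (a : Matrix (Fin n) (Fin n) R) * (a : Matrix (Fin n) (Fin n) R) = 0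
    rw [ha]
    exact Matrix.single_mul_single_of_ne 1 i0 i1 i0 (Ne.symm h01.ne) 1
  obtain ⟨m, hm, hpow, hrev⟩ := h a ha0
  rcases Nat.lt_or_ge m 2 with hm2 | hm2
  · -- m = 1
    interval_cases m
    rw [pow_one] at hpow hrev
    have hba : b * a = 0 := by
      apply Subtype.ext
      show (b : Matrix (Fin n) (Fin n) R) * (a : Matrix (Fin n) (Fin n) R) = 0
      rw [ha, hb]
      exact Matrix.single_mul_single_of_ne 1 i1 i2 i0 (Ne.symm h02.ne) 1
    have hab : a * b = 0 := (hrev b).mp hba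
    have : (Matrix.single i0 i1 (1:R)) * (Matrix.single i1 i2 (1:R)) = 0 := by
      have := congrArg (Subtype.val) hab
      simpa [ha, hb] using this
    rw [Matrix.single_mul_single_same] at this
    have := congrFun (congrFun this i0) i2
    simp [Matrix.single_apply_same] at this
  · -- m ≥ 2
    apply hpow
    have : a ^ m = a ^ (m - 2) * (a * a) := by
      rw [← pow_two, ← pow_add]
      congr 1
      omega
    rw [this, hasq, mul_zero]
end

section
/- Every weakly reversible ring is abelian, i.e., every idempotent element is central. -/
lemma sqZero_reversible {R : Type*} [Ring R] (hR : WeaklyReversible R) (a : R)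
    (ha : a * a = 0) (hne : a ≠ 0) : IsReversibleElem a := by
  obtain ⟨m, hm, hpow, hrev⟩ := hR a hne
  have hm1 : m = 1 := by
    by_contra h
    apply hpow
    calc a ^ m = a ^ 2 * a ^ (m - 2) := by rw [← pow_add]; congr 1; omega
    _ = 0 := by rw [pow_two, ha, zero_mul]
  rw [hm1, pow_one] at hrev
  exact hrev

lemma key {R : Type*} [Ring R] (hR : WeaklyReversible R) (e : R)
    (he : e * e = e) (r : R) : e * r * (1 - e) = 0 := by
  by_contra hne
  have hee : (1 - e) * e = 0 := by rw [sub_mul, one_mul, he, sub_self]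
  have hsq : (e * r * (1 - e)) * (e * r * (1 - e)) = 0 := by
    calc (e * r * (1 - e)) * (e * r * (1 - e))
        = e * r * ((1 - e) * e) * (r * (1 - e)) := by noncomm_ring
    _ = 0 := by rw [hee, mul_zero, zero_mul]
  have hrev := sqZero_reversible hR _ hsq hne
  apply hne
  have hae : (e * r * (1 - e)) * e = 0 := by
    calc (e * r * (1 - e)) * e = e * r * ((1 - e) * e) := by noncomm_ring
    _ = 0 := by rw [hee, mul_zero]
  have hea : e * (e * r * (1 - e)) = 0 := (hrev e).mpr hae
  calc e * r * (1 - e) = e * e * r * (1 - e) := by rw [he]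
  _ = e * (e * r * (1 - e)) := by noncomm_ring
  _ = 0 := hea

/-- Every weakly reversible ring is abelian: idempotents are central. -/
theorem stmt_4 {R : Type*} [Ring R] (hR : WeaklyReversible R) (e : R)
    (he : e * e = e) : ∀ r : R, e * r = r * e := by
  intro r
  have h1 := key hR e he r
  have h2 : (1 - e) * r * e = 0 := by
    by_contra hne
    have hee : e * (1 - e) = 0 := by rw [mul_sub, mul_one, he, sub_self]
    have hsq : ((1 - e) * r * e) * ((1 - e) * r * e) = 0 := by
      calc ((1 - e) * r * e) * ((1 - e) * r * e)
          = (1 - e) * r * (e * (1 - e)) * (r * e) := by noncomm_ring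
      _ = 0 := by rw [hee, mul_zero, zero_mul]
    have hrev := sqZero_reversible hR _ hsq hne
    apply hne
    have hea : e * ((1 - e) * r * e) = 0 := by
      calc e * ((1 - e) * r * e) = (e * (1 - e)) * r * e := by noncomm_ring
      _ = 0 := by rw [hee, zero_mul, zero_mul]
    have hae : ((1 - e) * r * e) * e = 0 := (hrev e).mp hea
    calc (1 - e) * r * e = (1 - e) * r * (e * e) := by rw [he]
    _ = ((1 - e) * r * e) * e := by noncomm_ring
    _ = 0 := hae
  have h1' : e * r = e * r * e := by
    rw [mul_sub, mul_one, sub_eq_zero] at h1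
    exact h1
  have h2' : r * e = e * r * e := by
    rw [sub_mul, sub_mul, one_mul] at h2
    exact sub_eq_zero.mp h2
  rw [h1', h2']
end

section
/- The ring M₂(ℤ/2ℤ) of 2×2 matrices over the field with two elements is not weakly reversible, even though for e = E₁₁ both corner rings eRe and (1−e)R(1−e) are weakly reversible (both being isomorphic to ℤ/2ℤ). -/
/-- `M₂(ℤ/2)` is not weakly reversible, even though for `e = E₁₁` both corner rings
`eRe` and `(1 - e)R(1 - e)` are weakly reversible — indeed each corner has exactly the two
elements `0` and its identity (`e`, resp. `1 - e`), so it is isomorphic to `ℤ/2`. -/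
theorem stmt_6 :
    ¬ WeaklyReversible (Matrix (Fin 2) (Fin 2) (ZMod 2)) ∧
    (let R := Matrix (Fin 2) (Fin 2) (ZMod 2)
     let e : R := Matrix.single 0 0 1
     (∀ x : R, e * x * e = 0 ∨ e * x * e = e) ∧
     (∀ x : R, (1 - e) * x * (1 - e) = 0 ∨ (1 - e) * x * (1 - e) = 1 - e) ∧
     (∀ x : R, e * x * e ≠ 0 → ∃ m : ℕ, 0 < m ∧ (e * x * e) ^ m ≠ 0 ∧
        ∀ y : R, (e * y * e) * (e * x * e) ^ m = 0 ↔ (e * x * e) ^ m * (e * y * e) = 0) ∧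
     (∀ x : R, (1 - e) * x * (1 - e) ≠ 0 → ∃ m : ℕ, 0 < m ∧
        ((1 - e) * x * (1 - e)) ^ m ≠ 0 ∧
        ∀ y : R, ((1 - e) * y * (1 - e)) * ((1 - e) * x * (1 - e)) ^ m = 0 ↔
          ((1 - e) * x * (1 - e)) ^ m * ((1 - e) * y * (1 - e)) = 0)) := by
  constructor
  · intro h
    set a : Matrix (Fin 2) (Fin 2) (ZMod 2) := Matrix.single 0 1 1 with ha
    have ha0 : a ≠ 0 := by decide
    obtain ⟨m, hm, hne, hrev⟩ := h a ha0
    have ha2 : a * a = 0 := by decide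
    match m, hm with
    | 1, _ =>
      have hb := (hrev (Matrix.single 1 1 1)).mp (by rw [pow_one]; decide)
      rw [pow_one] at hb
      exact absurd hb (by decide)
    | (n+2), _ =>
      apply hne
      rw [pow_add, pow_two, ha2, mul_zero]
  · refine ⟨by decide, by decide, ?_, ?_⟩
    · intro x hx
      exact ⟨1, one_pos, by rw [pow_one]; exact hx, by rw [pow_one]; revert hx; revert x; decide⟩
    · intro x hx
      exact ⟨1, one_pos, by rw [pow_one]; exact hx, by rw [pow_one]; revert hx; revert x; decide⟩
end

section
/- A weakly reversible ring R is right non-singular if and only if R is reduced. (In particular, if R is weakly reversible and right non-singular, then R has no nonzero elements of square zero.) -/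
/-- `a` lies in the right singular ideal: its right annihilator is an essential right
ideal, i.e. it meets every nonzero principal right ideal `bR` nontrivially. -/
def RightSingularElem {R : Type*} [Ring R] (a : R) : Prop :=
  ∀ b : R, b ≠ 0 → ∃ r : R, b * r ≠ 0 ∧ a * (b * r) = 0

/-- A weakly reversible ring is right non-singular iff it is reduced. -/
theorem stmt_7 {R : Type*} [Ring R] (hR : WeaklyReversible R) :
    (∀ a : R, RightSingularElem a → a = 0) ↔ (∀ x : R, x * x = 0 → x = 0) := by
  constructor
  · intro hns x hx2
    by_contra hx
    obtain ⟨m, hm, hxm, hrev⟩ := hR x hx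
    -- since x^2 = 0, m must be 1, so x itself is reversible
    have hm1 : m = 1 := by
      by_contra h
      have h2 : 2 ≤ m := by omega
      apply hxm
      calc x ^ m = x * x * x ^ (m - 2) := by
            rw [← pow_two, ← pow_add]; congr 1; omega
        _ = 0 := by rw [hx2, zero_mul]
    rw [hm1, pow_one] at hxm hrev
    -- x is right singular
    have hsing : RightSingularElem x := by
      intro b hb
      by_cases hxb : x * b = 0
      · exact ⟨1, by simpa using hb, by simp [hxb]⟩
      · have h1 : x * (x * b) = 0 := by rw [← mul_assoc, hx2, zero_mul]
        have h2 : (x * b) * x = 0 := (hrev (x * b)).mpr h1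
        have h3 : b * x ≠ 0 := fun h => hxb ((hrev b).mp h)
        exact ⟨x, h3, by rw [← mul_assoc, h2]⟩
    exact hx (hns x hsing)
  · intro hred a ha
    by_contra h
    obtain ⟨r, hr1, hr2⟩ := ha a h
    -- reduced ⇒ reversible: from a * (a*r) = 0 get (a*r) * a = 0
    have h3 : (a * r) * a = 0 := by
      apply hred
      have : (a * r * a) * (a * r * a) = (a * r) * (a * (a * r)) * a := by
        simp only [mul_assoc]
      rw [this, hr2, mul_zero, zero_mul]
    apply hr1
    apply hred
    have : (a * r) * (a * r) = (a * r * a) * r := by simp only [mul_assoc]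
    rw [this, h3, zero_mul]
end

section
/- Let R be a weakly reversible ring and let a, b be nonzero elements with ab = 0. Then there exists a positive integer t such that aᵗ ≠ 0, aᵗRb = {0}, and bRaᵗ = {0}. -/
theorem stmt_8 {R : Type*} [Ring R] (hR : WeaklyReversible R) (a b : R)
    (ha : a ≠ 0) (hb : b ≠ 0) (hab : a * b = 0) :
    ∃ t : ℕ, 0 < t ∧ a ^ t ≠ 0 ∧ (∀ r : R, a ^ t * r * b = 0) ∧ (∀ r : R, b * r * a ^ t = 0) := by
  obtain ⟨m, hm, hne, hrev⟩ := hR a ha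
  have h1 : a ^ m * b = 0 := by
    have : a ^ m = a ^ (m - 1) * a := by
      rw [← pow_succ, Nat.sub_add_cancel hm]
    rw [this, mul_assoc, hab, mul_zero]
  have h2 : b * a ^ m = 0 := (hrev b).mpr h1
  refine ⟨m, hm, hne, ?_, ?_⟩
  · intro r
    rw [mul_assoc]
    exact (hrev (r * b)).mp (by rw [mul_assoc, h2, mul_zero])
  · intro r
    have : a ^ m * (b * r) = 0 := by rw [← mul_assoc, h1, zero_mul]
    have := (hrev (b * r)).mpr this
    rwa [mul_assoc] at *
end

section
/- Let R be a weakly reversible ring and let a, b be nonzero elements with ab = 0. Then there exists a positive integer k such that bᵏ ≠ 0, aRbᵏ = {0}, and bᵏRa = {0}. -/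
theorem stmt_9 {R : Type*} [Ring R] (hR : WeaklyReversible R) (a b : R)
    (ha : a ≠ 0) (hb : b ≠ 0) (hab : a * b = 0) :
    ∃ k : ℕ, 0 < k ∧ b ^ k ≠ 0 ∧ (∀ r : R, a * r * b ^ k = 0) ∧ (∀ r : R, b ^ k * r * a = 0) := by
  obtain ⟨m, hm, hbm, hrev⟩ := hR b hb
  have habm : a * b ^ m = 0 := by
    cases m with
    | zero => omega
    | succ n => rw [pow_succ', ← mul_assoc, hab, zero_mul]
  have hbma : b ^ m * a = 0 := (hrev a).mp habm
  refine ⟨m, hm, hbm, ?_, ?_⟩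
  · intro r
    have h1 : b ^ m * (a * r) = 0 := by rw [← mul_assoc, hbma, zero_mul]
    exact (hrev (a * r)).mpr h1
  · intro r
    have h1 : (r * a) * b ^ m = 0 := by rw [mul_assoc, habm, mul_zero]
    have h2 := (hrev (r * a)).mp h1
    rwa [← mul_assoc] at h2
end

section
/- Let R be a weakly reversible ring. If a ∈ R satisfies aᵐ = 0 for some positive integer m, then (aR)ᵐ = {0}, i.e., every product a·r₁·a·r₂·⋯·a·rₘ with rᵢ ∈ R equals zero. -/
/-- In a weakly reversible ring, a nonzero square-zero element is itself reversible. -/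
lemma rev_of_sq_eq_zero {R : Type*} [Ring R] (hR : WeaklyReversible R) {x : R}
    (hx2 : x * x = 0) (hx : x ≠ 0) : IsReversibleElem x := by
  obtain ⟨k, hk, hxk, hrev⟩ := hR x hx
  have hk1 : k = 1 := by
    by_contra h
    apply hxk
    obtain ⟨d, rfl⟩ : ∃ d, k = 2 + d := ⟨k - 2, by omega⟩
    rw [pow_add, pow_two, hx2, zero_mul]
  rw [hk1, pow_one] at hrev
  exact hrev

/-- Key lemma: if `a ^ m = 0`, then `a^(m-j) * (r₁ a)(r₂ a)⋯(rⱼ a) = 0` for `j + 1 ≤ m`. -/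
lemma key_lemma {R : Type*} [Ring R] (hR : WeaklyReversible R) (a : R) (m : ℕ)
    (ha : a ^ m = 0) :
    ∀ l : List R, l.length + 1 ≤ m →
      a ^ (m - l.length) * (l.map (fun y => y * a)).prod = 0 := by
  intro l
  induction l using List.reverseRecOn with
  | nil => intro _; simpa using ha
  | append_singleton l₁ r ih =>
    intro hlen
    simp only [List.length_append, List.length_cons, List.length_nil] at hlen
    obtain ⟨d, rfl⟩ : ∃ d, m = l₁.length + 2 + d := ⟨m - (l₁.length + 2), by omega⟩
    set n := l₁.length with hn
    have h1 : n + 2 + d - (n + 1) = d + 1 := by omega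
    have h2 : n + 2 + d - n = d + 2 := by omega
    have hlen2 : (l₁ ++ [r]).length = n + 1 := by simp [hn]
    rw [hlen2, h1]
    set P : R := (l₁.map (fun y => y * a)).prod with hP
    set c : R := a ^ (d + 1) * P with hc
    -- a * c = 0 from the induction hypothesis
    have hac : a * c = 0 := by
      have := ih (by omega)
      rw [h2] at this
      rw [hc, ← mul_assoc, ← pow_succ']
      exact this
    -- c ends with a
    obtain ⟨c', hc'⟩ : ∃ c', c = c' * a := by
      rcases l₁.eq_nil_or_concat with h | ⟨l₂, s, h⟩
      · refine ⟨a ^ d, ?_⟩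
        rw [hc, hP, h]
        simp [pow_succ]
      · refine ⟨a ^ (d + 1) * ((l₂.map (fun y => y * a)).prod * s), ?_⟩
        rw [hc, hP, h]
        simp [List.concat_eq_append, mul_assoc]
    set t : R := c * (r * a) with ht
    -- the goal is t = 0
    rw [List.map_append, List.prod_append]
    have hgoal : a ^ (d + 1) * ((l₁.map (fun y => y * a)).prod *
        ([r].map (fun y => y * a)).prod) = t := by
      rw [ht, hc, hP]
      simp [mul_assoc]
    rw [hgoal]
    -- basic vanishing facts
    have hat : a * t = 0 := by rw [ht, ← mul_assoc, hac, zero_mul]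
    have hsat : ∀ s : R, (s * a) * t = 0 := fun s => by rw [mul_assoc, hat, mul_zero]
    have ht2 : t * t = 0 := by
      nth_rewrite 1 [ht]
      rw [mul_assoc, hsat r, mul_zero]
    have hrac : (r * a) * c = 0 := by rw [mul_assoc, hac, mul_zero]
    have hcc : c * c = 0 := by
      nth_rewrite 1 [hc']
      rw [mul_assoc, hac, mul_zero]
    have hct : c * t = 0 := by
      nth_rewrite 1 [hc']
      rw [mul_assoc, hat, mul_zero]
    have htc : t * c = 0 := by
      rw [ht, mul_assoc, hrac, mul_zero]
    by_cases ht0 : t = 0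
    · exact ht0
    · exfalso
      have htrev := rev_of_sq_eq_zero hR ht2 ht0
      have htra : t * (r * a) = 0 := (htrev (r * a)).mp (hsat r)
      set g : R := c + t with hg
      have hg2 : g * g = 0 := by
        rw [hg, mul_add, add_mul, add_mul, hcc, hct, htc, ht2]
        simp
      have hrag : (r * a) * g = 0 := by
        rw [hg, mul_add, hrac, hsat r, add_zero]
      have hgt : g * (r * a) = t := by
        rw [hg, add_mul, htra, add_zero, ht]
      apply ht0
      by_cases hg0 : g = 0
      · rw [← hgt, hg0, zero_mul]
      · have hgrev := rev_of_sq_eq_zero hR hg2 hg0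
        rw [← hgt]
        exact (hgrev (r * a)).mp hrag

/-- Shift lemma: `(x r₁)(x r₂)⋯(x rⱼ) x = x (r₁ x)(r₂ x)⋯(rⱼ x)`. -/
lemma shift_lemma {R : Type*} [Ring R] (x : R) :
    ∀ l : List R, (l.map (fun y => x * y)).prod * x = x * (l.map (fun y => y * x)).prod := by
  intro l
  induction l with
  | nil => simp
  | cons s l ih =>
    simp only [List.map_cons, List.prod_cons, mul_assoc, ih]

/-- If `a ^ m = 0` in a weakly reversible ring, then `(aR)^m = 0`: every product
`(a * r₁) * (a * r₂) * ⋯ * (a * rₘ)` vanishes. -/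
theorem stmt_10 {R : Type*} [Ring R] (hR : WeaklyReversible R) (a : R) (m : ℕ)
    (hm : 0 < m) (ha : a ^ m = 0) :
    ∀ r : Fin m → R, (List.ofFn fun i => a * r i).prod = 0 := by
  intro r
  have hl : (List.ofFn fun i => a * r i) = (List.ofFn r).map (fun y => a * y) := by
    rw [List.map_ofFn]
    rfl
  rw [hl]
  rcases (List.ofFn r).eq_nil_or_concat with h | ⟨l₁, x, h⟩
  · exfalso
    have hlen : (List.ofFn r).length = m := List.length_ofFn
    rw [h] at hlen
    simp at hlen
    omega
  · have hlen : (List.ofFn r).length = m := List.length_ofFn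
    rw [h, List.concat_eq_append] at hlen
    simp only [List.length_append, List.length_cons, List.length_nil] at hlen
    have hkey := key_lemma hR a m ha l₁ (by omega)
    have h1 : m - l₁.length = 1 := by omega
    rw [h1, pow_one] at hkey
    rw [h, List.concat_eq_append, List.map_append, List.prod_append]
    simp only [List.map_cons, List.map_nil, List.prod_cons, List.prod_nil, mul_one]
    rw [← mul_assoc, shift_lemma, hkey, zero_mul]
end

section
/- In a weakly reversible ring R, the set of nilpotent elements Nil(R) is a two-sided ideal of R. In particular, if a and b are nilpotent then a + b is nilpotent, and ras is nilpotent for all r, s ∈ R whenever a is nilpotent. -/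
namespace WRaux

variable {R : Type*} [Ring R]

/-- extend a zero product on the right -/
lemma zext {u w : R} (h : u * w = 0) (c : R) : u * (w * c) = 0 := by
  rw [← mul_assoc, h, zero_mul]

/-- a nonzero square-zero element is reversible -/
lemma sqz_rev (hR : WeaklyReversible R) {ρ : R} (hρ : ρ * ρ = 0) (h0 : ρ ≠ 0) :
    IsReversibleElem ρ := by
  obtain ⟨m, hm, hne, hrev⟩ := hR ρ h0
  have hm1 : m = 1 := by
    by_contra hm1
    have h2 : 2 ≤ m := by omega
    apply hne
    obtain ⟨k, rfl⟩ : ∃ k, m = k + 2 := ⟨m - 2, by omega⟩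
    rw [pow_add, pow_two, hρ, mul_zero]
  rwa [hm1, pow_one] at hrev

/-- cofinally many reversible powers of a non-nilpotent element -/
lemma revcof (hR : WeaklyReversible R) {x : R} (hx : ¬ IsNilpotent x) (k : ℕ) :
    ∃ e : ℕ, k ≤ e ∧ 1 ≤ e ∧ IsReversibleElem (x ^ e) := by
  have hk : x ^ (k + 1) ≠ 0 := fun h => hx ⟨k + 1, h⟩
  obtain ⟨m, hm, hne, hrev⟩ := hR _ hk
  rw [← pow_mul] at hrev
  refine ⟨(k + 1) * m, ?_, ?_, hrev⟩
  · calc k ≤ (k+1) * 1 := by omega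
    _ ≤ (k+1) * m := by exact Nat.mul_le_mul_left _ hm
  · exact Nat.succ_le_of_lt (Nat.mul_pos (Nat.succ_pos k) hm)

/-- the eventual annihilator of powers of x -/
def Ux (x z : R) : Prop := ∃ F : ℕ, x ^ F * z = 0

lemma ux_zero (x : R) : Ux x (0 : R) := ⟨0, by simp⟩

lemma ux_of_right {x z : R} {F : ℕ} (h : z * x ^ F = 0) (hR : WeaklyReversible R)
    (hx : ¬ IsNilpotent x) : Ux x z := by
  obtain ⟨e, heF, -, hrev⟩ := revcof hR hx F
  have h' : z * x ^ e = 0 := by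
    have : x ^ e = x ^ F * x ^ (e - F) := by rw [← pow_add]; congr 1; omega
    rw [this, ← mul_assoc, h, zero_mul]
  exact ⟨e, (hrev z).mp h'⟩

lemma ux_right_form {x z : R} (hR : WeaklyReversible R) (hx : ¬ IsNilpotent x)
    (h : Ux x z) : ∃ F : ℕ, z * x ^ F = 0 := by
  obtain ⟨F, hF⟩ := h
  obtain ⟨e, heF, -, hrev⟩ := revcof hR hx F
  have h' : x ^ e * z = 0 := by
    have : x ^ e = x ^ (e - F) * x ^ F := by rw [← pow_add]; congr 1; omega
    rw [this, mul_assoc, hF, mul_zero]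
  exact ⟨e, (hrev z).mpr h'⟩

lemma ux_add {x z₁ z₂ : R} (h₁ : Ux x z₁) (h₂ : Ux x z₂) : Ux x (z₁ + z₂) := by
  obtain ⟨F₁, hF₁⟩ := h₁
  obtain ⟨F₂, hF₂⟩ := h₂
  refine ⟨F₁ + F₂, ?_⟩
  rw [mul_add]
  have e1 : x ^ (F₁ + F₂) * z₁ = 0 := by
    rw [add_comm F₁ F₂, pow_add, mul_assoc, hF₁, mul_zero]
  have e2 : x ^ (F₁ + F₂) * z₂ = 0 := by
    rw [pow_add, mul_assoc, hF₂, mul_zero]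
  rw [e1, e2, add_zero]

lemma ux_mulr {x z : R} (h : Ux x z) (r : R) : Ux x (z * r) := by
  obtain ⟨F, hF⟩ := h
  exact ⟨F, by rw [← mul_assoc, hF, zero_mul]⟩

lemma ux_mull {x z : R} (hR : WeaklyReversible R) (hx : ¬ IsNilpotent x)
    (h : Ux x z) (r : R) : Ux x (r * z) := by
  obtain ⟨F, hF⟩ := ux_right_form hR hx h
  exact ux_of_right (z := r * z) (F := F) (by rw [mul_assoc, hF, mul_zero]) hR hx

lemma ux_divL {x z : R} {k : ℕ} (h : Ux x (x ^ k * z)) : Ux x z := by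
  obtain ⟨F, hF⟩ := h
  exact ⟨F + k, by rw [pow_add, mul_assoc]; exact hF⟩

lemma ux_divR {x z : R} {k : ℕ} (hR : WeaklyReversible R) (hx : ¬ IsNilpotent x)
    (h : Ux x (z * x ^ k)) : Ux x z := by
  obtain ⟨F, hF⟩ := ux_right_form hR hx h
  exact ux_of_right (F := k + F) (by rw [pow_add, ← mul_assoc]; exact hF) hR hx

lemma ux_one_false {x : R} (hx : ¬ IsNilpotent x) (h : Ux x (1 : R)) : False := by
  obtain ⟨F, hF⟩ := h
  rw [mul_one] at hF
  exact hx ⟨F, hF⟩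

variable {R : Type*} [Ring R]

/-- Anchor lemma: if ρ is reversible and kills γ, and X = γ + δ with δ^L = 0,
then X^L kills ρ (on both sides; we state the left-kill). -/
lemma anc {ρ γ δ X : R} {L : ℕ} (hrev : IsReversibleElem ρ) (hργ : ρ * γ = 0)
    (hsum : γ + δ = X) (hδ : δ ^ L = 0) : X ^ L * ρ = 0 := by
  have key : ∀ k : ℕ, ∃ w : R, X ^ k = δ ^ k + w ∧ ρ * w = 0 := by
    intro k
    induction k with
    | zero => exact ⟨0, by simp, by simp⟩
    | succ k ih =>
      obtain ⟨w, hw, hρw⟩ := ih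
      refine ⟨γ * δ ^ k + (γ * w + δ * w), ?_, ?_⟩
      · rw [pow_succ' X, hw, ← hsum, pow_succ' δ]
        noncomm_ring
      · have h1 : ρ * (γ * δ ^ k) = 0 := by rw [← mul_assoc, hργ, zero_mul]
        have h2 : ρ * (γ * w) = 0 := by rw [← mul_assoc, hργ, zero_mul]
        have h3 : ρ * (δ * w) = 0 := by
          have hwρ : w * ρ = 0 := (hrev w).mpr hρw
          have : (δ * w) * ρ = 0 := by rw [mul_assoc, hwρ, mul_zero]
          exact (hrev _).mp this
        rw [mul_add, mul_add, h1, h2, h3, add_zero, add_zero]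
  obtain ⟨w, hw, hρw⟩ := key L
  have hwρ : w * ρ = 0 := (hrev w).mpr hρw
  rw [hw, hδ, zero_add, hwρ]

/-- Multiplicative closure: a nilpotent times anything is nilpotent. -/
lemma nil_mul (hR : WeaklyReversible R) {a : R} (ha : IsNilpotent a) (t : R) :
    IsNilpotent (a * t) := by
  by_contra hx
  obtain ⟨n₀, hn₀⟩ := ha
  have hn : a ^ (n₀ + 1) = 0 := by rw [pow_succ, hn₀, zero_mul]
  -- cofinal reversible powers of x := a * t
  have hrc : ∀ k : ℕ, ∃ e : ℕ, k ≤ e ∧ 1 ≤ e ∧ IsReversibleElem ((a * t) ^ e) := by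
    intro k
    have hk : (a * t) ^ (k + 1) ≠ 0 := fun h => hx ⟨k + 1, h⟩
    obtain ⟨m, hm, hne, hrev⟩ := hR _ hk
    rw [← pow_mul] at hrev
    refine ⟨(k + 1) * m, ?_, ?_, hrev⟩
    · calc k ≤ (k+1) * 1 := by omega
      _ ≤ (k+1) * m := Nat.mul_le_mul_left _ hm
    · exact Nat.succ_le_of_lt (Nat.mul_pos (Nat.succ_pos k) hm)
  have key : ∀ d : ℕ, ∀ i : ℕ, i + d = n₀ + 1 → 1 ≤ i →
      ∃ F : ℕ, (a * t) ^ F * a ^ i = 0 := by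
    intro d
    induction d with
    | zero =>
      intro i hi _
      refine ⟨1, ?_⟩
      have : i = n₀ + 1 := by omega
      rw [this, hn, mul_zero]
    | succ d ih =>
      intro i hi h1
      obtain ⟨F, hF⟩ := ih (i + 1) (by omega) (by omega)
      obtain ⟨e, heF, he1, hrev⟩ := hrc F
      have he : (a * t) ^ e * a ^ (i + 1) = 0 := by
        have hsplit : (a * t) ^ e = (a * t) ^ (e - F) * (a * t) ^ F := by
          rw [← pow_add]; congr 1; omega
        rw [hsplit, mul_assoc, hF, mul_zero]
      -- (x^e * a^i) * x^e = 0
      have hkey : ((a * t) ^ e * a ^ i) * (a * t) ^ e = 0 := by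
        obtain ⟨e₁, rfl⟩ : ∃ e₁, e = e₁ + 1 := ⟨e - 1, by omega⟩
        have hx' : (a * t) ^ (e₁ + 1) = a * (t * (a * t) ^ e₁) := by
          rw [pow_succ' (a*t), mul_assoc]
        have hz : ∀ c : R, (a * t) ^ (e₁ + 1) * (a ^ (i+1) * c) = 0 := zext he
        calc ((a * t) ^ (e₁+1) * a ^ i) * (a * t) ^ (e₁+1)
            = (a * t) ^ (e₁+1) * (a ^ i * (a * (t * (a * t) ^ e₁))) := by
              rw [hx']; rw [mul_assoc]
          _ = (a * t) ^ (e₁+1) * (a ^ (i+1) * (t * (a * t) ^ e₁)) := by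
              rw [← mul_assoc (a ^ i) a, ← pow_succ]
          _ = 0 := hz _
      have := (hrev ((a * t) ^ e * a ^ i)).mp hkey
      exact ⟨e + e, by rw [pow_add, mul_assoc]; exact this⟩
  obtain ⟨F, hF⟩ := key n₀ 1 (by omega) le_rfl
  apply hx
  refine ⟨F + 1, ?_⟩
  rw [pow_succ]
  rw [pow_one] at hF
  rw [← mul_assoc, hF, zero_mul]

/-- sandwich closure -/
lemma nil_sandwich (hR : WeaklyReversible R) {a : R} (ha : IsNilpotent a) (r s : R) :
    IsNilpotent (r * a * s) := by
  obtain ⟨K, hK⟩ := nil_mul hR ha (s * r)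
  refine ⟨K + 1, ?_⟩
  have hiter : ∀ k : ℕ, (r * a * s) ^ (k + 1) = r * (a * (s * r)) ^ k * (a * s) := by
    intro k
    induction k with
    | zero => simp [mul_assoc]
    | succ k ih =>
      rw [pow_succ, ih]
      rw [pow_succ]
      noncomm_ring
  rw [hiter K, hK, mul_zero, zero_mul]

lemma nil_mul_left (hR : WeaklyReversible R) {a : R} (ha : IsNilpotent a) (t : R) :
    IsNilpotent (t * a) := by
  have := nil_sandwich hR ha t 1
  rwa [mul_one] at this

variable {R : Type*} [Ring R]

/-- Bilateral lemma: the penultimate power of γ lies in the eventual annihilator,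
whenever γ + δ = x^e with δ nilpotent. -/
lemma bil (hR : WeaklyReversible R) {x : R} (hx : ¬ IsNilpotent x) {γ δ : R}
    {e L K : ℕ} (hsum : γ + δ = x ^ e) (hδ : δ ^ L = 0) (hγ : γ ^ (K + 1) = 0) :
    Ux x (γ ^ K) := by
  have hτγ : γ ^ K * γ = 0 := by rw [← pow_succ]; exact hγ
  -- Step 1 : γ * w * γ^K is always in the annihilator family
  have step1 : ∀ w : R, Ux x (γ * (w * γ ^ K)) := by
    intro w
    by_cases hz : γ * (w * γ ^ K) = 0
    · rw [hz]; exact ux_zero x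
    · have k1 : γ ^ K * (γ * (w * γ ^ K)) = 0 := zext hτγ _
      have hρρ : (γ * (w * γ ^ K)) * (γ * (w * γ ^ K)) = 0 := by
        have h2 : (γ * (w * γ ^ K)) * (γ * (w * γ ^ K))
            = γ * (w * (γ ^ K * (γ * (w * γ ^ K)))) := by
          simp only [mul_assoc]
        rw [h2, k1, mul_zero, mul_zero]
      have hrev := sqz_rev hR hρρ hz
      have hργ : (γ * (w * γ ^ K)) * γ = 0 := by
        have h2 : (γ * (w * γ ^ K)) * γ = γ * (w * (γ ^ K * γ)) := by
          simp only [mul_assoc]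
        rw [h2, hτγ, mul_zero, mul_zero]
      have hanc := anc hrev hργ hsum hδ
      exact ⟨e * L, by rw [pow_mul]; exact hanc⟩
  -- Step 2 : induction on powers of x^e
  have step2 : ∀ k : ℕ, ∃ u : R, (x ^ e) ^ k * γ ^ K = δ ^ k * γ ^ K + u ∧ Ux x u := by
    intro k
    induction k with
    | zero => exact ⟨0, by simp, ux_zero x⟩
    | succ k ih =>
      obtain ⟨u, hu, hUu⟩ := ih
      refine ⟨γ * (δ ^ k * γ ^ K) + x ^ e * u, ?_, ?_⟩
      · rw [pow_succ' (x ^ e), mul_assoc, hu, ← hsum, pow_succ' δ]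
        noncomm_ring
      · exact ux_add (step1 _) (ux_mull hR hx hUu _)
  obtain ⟨u, hu, hUu⟩ := step2 L
  have heq : x ^ (e * L) * γ ^ K = u := by
    rw [pow_mul, hu, hδ, zero_mul, zero_add]
  obtain ⟨F, hF⟩ := hUu
  exact ux_divL (k := e * L) ⟨F, by rw [heq]; exact hF⟩

/-- words  c x^{g₁} c x^{g₂} ⋯ c -/
def Wd (x c : R) : List ℕ → R
  | [] => c
  | g :: l => c * x ^ g * Wd x c l

lemma wd_append (x c : R) (l : List ℕ) (G : ℕ) :
    Wd x c (l ++ [G]) = Wd x c l * x ^ G * c := by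
  induction l with
  | nil => simp [Wd]
  | cons g t ih =>
    show c * x ^ g * Wd x c (t ++ [G]) = c * x ^ g * Wd x c t * x ^ G * c
    rw [ih]
    simp only [mul_assoc]

lemma pow_wd (x c : R) (g : ℕ) : ∀ k : ℕ,
    (c * x ^ g) ^ (k + 1) = Wd x c (List.replicate k g) * x ^ g := by
  intro k
  induction k with
  | zero => simp [Wd]
  | succ k ih =>
    rw [pow_succ' (c * x ^ g), ih, List.replicate_succ]
    show c * x ^ g * (Wd x c (List.replicate k g) * x ^ g)
        = c * x ^ g * Wd x c (List.replicate k g) * x ^ g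
    rw [mul_assoc (c * x ^ g)]

/-- Mirror rotation: from a U-word starting with α we may cycle the leading α
to the end, with a fresh large pad. -/
lemma mrl (hR : WeaklyReversible R) {x : R} (hx : ¬ IsNilpotent x) {α β : R} {Q : ℕ}
    (hsum : α + β = x) (hβ : β ^ Q = 0) {g : ℕ} {v : R}
    (hω : Ux x (α * x ^ g * v)) :
    ∃ θ : ℕ, ∀ G, θ ≤ G → Ux x (v * x ^ G * α) := by
  obtain ⟨F, hF⟩ := ux_right_form hR hx hω
  refine ⟨F, fun G hG => ?_⟩
  have hωG : α * x ^ g * v * x ^ G = 0 := by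
    have hsp : x ^ G = x ^ F * x ^ (G - F) := by rw [← pow_add]; congr 1; omega
    rw [hsp, ← mul_assoc, hF, zero_mul]
  have k2 : ∀ c : R, α * (x ^ g * (v * (x ^ G * c))) = 0 := by
    intro c
    have h0 := zext hωG c
    simpa only [mul_assoc] using h0
  by_cases hz : x ^ g * (v * (x ^ G * α)) = 0
  · refine ⟨g, ?_⟩
    rw [mul_assoc]; exact hz
  · have hρρ : (x ^ g * (v * (x ^ G * α))) * (x ^ g * (v * (x ^ G * α))) = 0 := by
      have h2 : (x ^ g * (v * (x ^ G * α))) * (x ^ g * (v * (x ^ G * α)))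
          = x ^ g * (v * (x ^ G * (α * (x ^ g * (v * (x ^ G * α)))))) := by
        simp only [mul_assoc]
      rw [h2, k2 α, mul_zero, mul_zero, mul_zero]
    have hrev := sqz_rev hR hρρ hz
    have hαρ : α * (x ^ g * (v * (x ^ G * α))) = 0 := k2 α
    have hρα : (x ^ g * (v * (x ^ G * α))) * α = 0 := (hrev α).mp hαρ
    have hanc := anc hrev hρα hsum hβ
    have hUρ : Ux x (x ^ g * (v * (x ^ G * α))) := ⟨Q, hanc⟩
    have hdiv : Ux x (v * (x ^ G * α)) := ux_divL (k := g) hUρ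
    obtain ⟨F', hF'⟩ := hdiv
    exact ⟨F', by rw [mul_assoc]; exact hF'⟩

variable {R : Type*} [Ring R]

/-- staircase-extendable family -/
def RFam (x c : R) : ℕ → R → Prop
  | 0, w => Ux x w
  | (j+1), w => ∃ θ : ℕ, ∀ G, θ ≤ G → RFam x c j (w * x ^ G * c)

lemma rotchain (hR : WeaklyReversible R) {x : R} (hx : ¬ IsNilpotent x) {α β : R}
    {Q : ℕ} (hsum : α + β = x) (hβ : β ^ Q = 0) (g₀ : ℕ) :
    ∀ j : ℕ, ∀ l : List ℕ, Ux x (Wd x α (List.replicate j g₀ ++ l)) →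
      RFam x α j (Wd x α l) := by
  intro j
  induction j with
  | zero =>
    intro l h
    show Ux x (Wd x α l)
    simpa using h
  | succ j ih =>
    intro l h
    rw [List.replicate_succ, List.cons_append] at h
    have h' : Ux x (α * x ^ g₀ * Wd x α (List.replicate j g₀ ++ l)) := h
    obtain ⟨θ, hθ⟩ := mrl hR hx hsum hβ h'
    show ∃ θ : ℕ, ∀ G, θ ≤ G → RFam x α j (Wd x α l * x ^ G * α)
    refine ⟨θ, fun G hG => ?_⟩
    have h2 := hθ G hG
    rw [← wd_append, List.append_assoc] at h2
    have h3 := ih (l ++ [G]) h2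
    rwa [wd_append] at h3

lemma iter (hR : WeaklyReversible R) {x : R} (hx : ¬ IsNilpotent x) {α β : R}
    (hsum : α + β = x) {w : R} {θ : ℕ}
    (hUa : ∀ σ, θ ≤ σ → Ux x (w * x ^ σ * α)) :
    ∀ l : List ℕ, ∀ σ, θ ≤ σ → Ux x (w * x ^ σ * Wd x β l) → Ux x w := by
  intro l
  induction l with
  | nil =>
    intro σ hσ h
    have heq : w * x ^ (σ + 1) = w * x ^ σ * α + w * x ^ σ * β := by
      rw [pow_succ, ← hsum]
      noncomm_ring
    have hU : Ux x (w * x ^ (σ + 1)) := by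
      rw [heq]
      exact ux_add (hUa σ hσ) h
    exact ux_divR hR hx hU
  | cons g t ih =>
    intro σ hσ hU
    have hp : x ^ (σ + 1 + g) = x ^ σ * (α + β) * x ^ g := by
      rw [pow_add, pow_succ, hsum]
    have heq : w * x ^ (σ + 1 + g) * Wd x β t
        = w * x ^ σ * Wd x β (g :: t) + (w * x ^ σ * α) * (x ^ g * Wd x β t) := by
      show w * x ^ (σ + 1 + g) * Wd x β t
          = w * x ^ σ * (β * x ^ g * Wd x β t) + (w * x ^ σ * α) * (x ^ g * Wd x β t)
      rw [hp]
      noncomm_ring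
    have hU2 : Ux x (w * x ^ (σ + 1 + g) * Wd x β t) := by
      rw [heq]
      exact ux_add hU (ux_mulr (hUa σ hσ) _)
    exact ih (σ + 1 + g) (by omega) hU2

lemma desc (hR : WeaklyReversible R) {x : R} (hx : ¬ IsNilpotent x) {α β : R}
    (hsum : α + β = x) (hbr : ∃ l : List ℕ, Ux x (Wd x β l)) {w : R}
    (hw : ∃ θ : ℕ, ∀ σ, θ ≤ σ → Ux x (w * x ^ σ * α)) : Ux x w := by
  obtain ⟨l, hl⟩ := hbr
  obtain ⟨θ, hθ⟩ := hw
  have h0 : Ux x (w * x ^ θ * Wd x β l) := ux_mull hR hx hl _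
  exact iter hR hx hsum hθ l θ le_rfl h0

lemma rfam_imp (hR : WeaklyReversible R) {x : R} (hx : ¬ IsNilpotent x) {α β : R}
    (hsum : α + β = x) (hbr : ∃ l : List ℕ, Ux x (Wd x β l)) :
    ∀ j : ℕ, ∀ w : R, RFam x α j w → Ux x w := by
  intro j
  induction j with
  | zero => intro w h; exact h
  | succ j ih =>
    intro w h
    obtain ⟨θ, hθ⟩ := h
    exact desc hR hx hsum hbr ⟨θ, fun σ hσ => ih _ (hθ σ hσ)⟩

/-- Additive closure of nilpotents in a weakly reversible ring. -/
lemma add_nil (hR : WeaklyReversible R) {a b : R} (ha : IsNilpotent a)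
    (hb : IsNilpotent b) : IsNilpotent (a + b) := by
  by_contra hx
  obtain ⟨n₀, hn₀⟩ := ha
  obtain ⟨q₀, hq₀⟩ := hb
  have hn : a ^ (n₀ + 1) = 0 := by rw [pow_succ, hn₀, zero_mul]
  have hq : b ^ (q₀ + 1) = 0 := by rw [pow_succ, hq₀, zero_mul]
  set x := a + b with hxdef
  have hsum_ab : a + b = x := rfl
  have hsum_ba : b + a = x := by rw [add_comm]
  obtain ⟨e, he1, -, hrev⟩ := revcof hR hx 1
  obtain ⟨e', rfl⟩ : ∃ e'', e = e'' + 1 := ⟨e - 1, by omega⟩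
  have hcd : a * x ^ e' + b * x ^ e' = x ^ (e' + 1) := by
    rw [← add_mul, hsum_ab, pow_succ' x]
  have hdc : b * x ^ e' + a * x ^ e' = x ^ (e' + 1) := by
    rw [add_comm]; exact hcd
  obtain ⟨K, hK⟩ := nil_mul hR ⟨n₀ + 1, hn⟩ (x ^ e')
  obtain ⟨L, hL⟩ := nil_mul hR ⟨q₀ + 1, hq⟩ (x ^ e')
  have hK1 : (a * x ^ e') ^ (K + 1) = 0 := by rw [pow_succ, hK, zero_mul]
  have hL1 : (b * x ^ e') ^ (L + 1) = 0 := by rw [pow_succ, hL, zero_mul]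
  have hUc : Ux x ((a * x ^ e') ^ K) := bil hR hx hcd hL1 hK1
  have hUd : Ux x ((b * x ^ e') ^ L) := bil hR hx hdc hK1 hL1
  -- extract base U-words
  rcases K with _ | k
  · exact ux_one_false hx (by simpa using hUc)
  rcases L with _ | l
  · exact ux_one_false hx (by simpa using hUd)
  rw [pow_wd] at hUc hUd
  have haw : Ux x (Wd x a (List.replicate k e')) := ux_divR hR hx hUc
  have hbw : Ux x (Wd x b (List.replicate l e')) := ux_divR hR hx hUd
  -- rotation chains
  have hRFa : RFam x a k (Wd x a []) := by
    apply rotchain hR hx hsum_ab hq e' k []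
    rwa [List.append_nil]
  have hRFb : RFam x b l (Wd x b []) := by
    apply rotchain hR hx hsum_ba hn e' l []
    rwa [List.append_nil]
  have hUa : Ux x a := rfam_imp hR hx hsum_ab ⟨_, hbw⟩ k a hRFa
  have hUb : Ux x b := rfam_imp hR hx hsum_ba ⟨_, haw⟩ l b hRFb
  obtain ⟨F₁, h₁⟩ := hUa
  obtain ⟨F₂, h₂⟩ := hUb
  refine hx ⟨F₁ + F₂ + 1, ?_⟩
  have ea : x ^ (F₁ + F₂) * a = 0 := by
    rw [add_comm F₁ F₂, pow_add, mul_assoc, h₁, mul_zero]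
  have eb : x ^ (F₁ + F₂) * b = 0 := by
    rw [pow_add, mul_assoc, h₂, mul_zero]
  rw [pow_succ, ← hsum_ab, mul_add, ea, eb, add_zero]

end WRaux

/-- In a weakly reversible ring the nilpotent elements form a two-sided ideal. -/
theorem stmt_12 {R : Type*} [Ring R] (hR : WeaklyReversible R) :
    (∀ a b : R, IsNilpotent a → IsNilpotent b → IsNilpotent (a + b)) ∧
    (∀ a r s : R, IsNilpotent a → IsNilpotent (r * a * s)) := by
  constructor
  · intro a b ha hb
    exact WRaux.add_nil hR ha hb
  · intro a r s ha
    exact WRaux.nil_sandwich hR ha r s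
end

section
/- For n ≥ 2 and F a field, the upper triangular matrix ring Tₙ(F) has the property that Tₙ(F)/Nil(Tₙ(F)) is reduced (isomorphic to Fⁿ), but Tₙ(F) itself is not weakly reversible. -/
/-- `Tₙ(F)`: the subring of `n × n` upper triangular matrices over `F`. -/
def TnSubring (n : ℕ) (F : Type*) [Ring F] : Subring (Matrix (Fin n) (Fin n) F) where
  carrier := {M | ∀ i j, j < i → M i j = 0}
  zero_mem' := fun _ _ _ => rfl
  one_mem' := fun i j h => Matrix.one_apply_ne (Ne.symm (ne_of_lt h))
  add_mem' := fun {A B} hA hB i j h => by simp [Matrix.add_apply, hA i j h, hB i j h]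
  neg_mem' := fun {A} hA i j h => by simp [Matrix.neg_apply, hA i j h]
  mul_mem' := fun {A B} hA hB i j h => by
    rw [Matrix.mul_apply]
    refine Finset.sum_eq_zero fun k _ => ?_
    rcases lt_or_ge k i with hk | hk
    · rw [hA i k hk, zero_mul]
    · rw [hB k j (lt_of_lt_of_le h hk), mul_zero]

section Aux

variable {F : Type*} [Field F] {n : ℕ}

lemma tn_diag_mul (A B : Matrix (Fin n) (Fin n) F)
    (hA : ∀ i j, j < i → A i j = 0) (hB : ∀ i j, j < i → B i j = 0) (i : Fin n) :
    (A * B) i i = A i i * B i i := by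
  rw [Matrix.mul_apply, Finset.sum_eq_single i]
  · intro k _ hk
    rcases lt_or_gt_of_ne hk with h | h
    · rw [hA i k h, zero_mul]
    · rw [hB k i h, mul_zero]
  · intro h; exact absurd (Finset.mem_univ i) h

lemma tn_diag_pow (A : TnSubring n F) (m : ℕ) (i : Fin n) :
    ((A : Matrix (Fin n) (Fin n) F) ^ m) i i = ((A : Matrix (Fin n) (Fin n) F) i i) ^ m := by
  induction m with
  | zero => simp [Matrix.one_apply_eq]
  | succ m ih =>
      rw [pow_succ, pow_succ, ← ih]
      have hAm : ∀ i j : Fin n, j < i → ((A : Matrix (Fin n) (Fin n) F) ^ m) i j = 0 := by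
        have := (A ^ m).2
        rwa [show ((A ^ m : TnSubring n F) : Matrix (Fin n) (Fin n) F)
            = (A : Matrix (Fin n) (Fin n) F) ^ m from SubmonoidClass.coe_pow A m] at this
      exact tn_diag_mul _ _ hAm A.2 i

lemma tn_strict_pow (A : Matrix (Fin n) (Fin n) F)
    (h : ∀ i j : Fin n, (j : ℕ) ≤ (i : ℕ) → A i j = 0) :
    ∀ k, ∀ i j : Fin n, (j : ℕ) < (i : ℕ) + k → (A ^ k) i j = 0 := by
  intro k
  induction k with
  | zero =>
      intro i j hij
      simp only [pow_zero]
      exact Matrix.one_apply_ne (by intro e; subst e; omega)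
  | succ k ih =>
      intro i j hij
      rw [pow_succ', Matrix.mul_apply]
      refine Finset.sum_eq_zero fun l _ => ?_
      rcases le_or_gt (l : ℕ) (i : ℕ) with hl | hl
      · rw [h i l hl, zero_mul]
      · rw [ih l j (by omega), mul_zero]

end Aux

/-- For `n ≥ 2` and a field `F`, the quotient of `Tₙ(F)` by its nilpotent elements is
reduced — indeed the diagonal map onto `Fⁿ` is a surjective ring homomorphism whose kernel
is exactly the set of nilpotent elements — yet `Tₙ(F)` is not weakly reversible. -/
theorem stmt_14 (F : Type*) [Field F] (n : ℕ) (hn : 2 ≤ n) :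
    (∃ φ : TnSubring n F →+* (Fin n → F),
      (∀ A : TnSubring n F, φ A = fun i => (A : Matrix (Fin n) (Fin n) F) i i) ∧
      Function.Surjective φ ∧
      ∀ A : TnSubring n F, φ A = 0 ↔ IsNilpotent A) ∧
    ¬ WeaklyReversible (TnSubring n F) := by
  constructor
  · refine ⟨{ toFun := fun A => fun i => (A : Matrix (Fin n) (Fin n) F) i i
              map_one' := funext fun i => Matrix.one_apply_eq i
              map_mul' := fun A B => funext fun i => tn_diag_mul _ _ A.2 B.2 i
              map_zero' := rfl
              map_add' := fun A B => rfl }, fun A => rfl, ?_, ?_⟩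
    · -- surjectivity
      intro f
      refine ⟨⟨Matrix.diagonal f, fun i j h => Matrix.diagonal_apply_ne f (ne_of_gt h)⟩, ?_⟩
      funext i
      exact Matrix.diagonal_apply_eq f i
    · -- kernel = nilpotents
      intro A
      constructor
      · intro h
        have hdiag : ∀ i : Fin n, (A : Matrix (Fin n) (Fin n) F) i i = 0 := fun i =>
          congrFun h i
        have hstrict : ∀ i j : Fin n, (j : ℕ) ≤ (i : ℕ) →
            (A : Matrix (Fin n) (Fin n) F) i j = 0 := by
          intro i j hij
          rcases eq_or_lt_of_le hij with he | hl
          · have : j = i := Fin.ext he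
            subst this; exact hdiag j
          · exact A.2 i j (by exact_mod_cast hl)
        refine ⟨n, Subtype.ext ?_⟩
        rw [SubmonoidClass.coe_pow]
        ext i j
        have := tn_strict_pow (A : Matrix (Fin n) (Fin n) F) hstrict n i j
          (by have := j.isLt; omega)
        simpa using this
      · rintro ⟨m, hm⟩
        funext i
        have hcoe : ((A : Matrix (Fin n) (Fin n) F)) ^ m = 0 := by
          have := congrArg (fun X : TnSubring n F => (X : Matrix (Fin n) (Fin n) F)) hm
          simpa [SubmonoidClass.coe_pow] using this
        have : IsNilpotent ((A : Matrix (Fin n) (Fin n) F) i i) := by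
          refine ⟨m, ?_⟩
          rw [← tn_diag_pow A m i, hcoe]
          rfl
        exact this.eq_zero
  · -- not weakly reversible
    intro hWR
    set i0 : Fin n := ⟨0, by omega⟩ with hi0
    set i1 : Fin n := ⟨1, by omega⟩ with hi1
    have hne01 : i1 ≠ i0 := by simp [hi0, hi1, Fin.ext_iff]
    have hEmem : ∀ i j : Fin n, j < i → Matrix.single i0 i1 (1 : F) i j = 0 := by
      intro i j h
      apply Matrix.single_apply_of_ne
      rintro ⟨rfl, rfl⟩
      exact absurd h (by simp [hi0, hi1, Fin.lt_def])
    have hBmem : ∀ i j : Fin n, j < i → Matrix.single i1 i1 (1 : F) i j = 0 := by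
      intro i j h
      apply Matrix.single_apply_of_ne
      rintro ⟨rfl, rfl⟩
      exact lt_irrefl _ h
    set a : TnSubring n F := ⟨Matrix.single i0 i1 (1 : F), hEmem⟩ with ha
    set b : TnSubring n F := ⟨Matrix.single i1 i1 (1 : F), hBmem⟩ with hb
    have haa : (a : Matrix (Fin n) (Fin n) F) * (a : Matrix (Fin n) (Fin n) F) = 0 :=
      Matrix.single_mul_single_of_ne (c := (1 : F)) i0 i1 i0 hne01 1
    have ha0 : a ≠ 0 := by
      intro h
      have := congrArg (fun X : TnSubring n F => (X : Matrix (Fin n) (Fin n) F) i0 i1) h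
      simp [ha, Matrix.single_apply_same] at this
    obtain ⟨m, hm0, hmne, hrev⟩ := hWR a ha0
    have hm1 : m = 1 := by
      by_contra hne
      have h2 : 2 ≤ m := by omega
      apply hmne
      apply Subtype.ext
      rw [SubmonoidClass.coe_pow]
      have : (a : Matrix (Fin n) (Fin n) F) ^ m
          = (a : Matrix (Fin n) (Fin n) F) ^ 2 * (a : Matrix (Fin n) (Fin n) F) ^ (m - 2) := by
        rw [← pow_add]; congr 1; omega
      rw [this, sq, haa, zero_mul]
      rfl
    subst hm1
    rw [pow_one] at hrev
    have hba : b * a = 0 := by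
      apply Subtype.ext
      show (b : Matrix (Fin n) (Fin n) F) * (a : Matrix (Fin n) (Fin n) F) = 0
      exact Matrix.single_mul_single_of_ne (c := (1 : F)) i1 i1 i0 hne01 1
    have hab : a * b ≠ 0 := by
      intro h
      have := congrArg (fun X : TnSubring n F => (X : Matrix (Fin n) (Fin n) F) i0 i1) h
      simp only [ha, hb] at this
      rw [show ((⟨Matrix.single i0 i1 (1:F), hEmem⟩ *
          ⟨Matrix.single i1 i1 (1:F), hBmem⟩ : TnSubring n F) :
          Matrix (Fin n) (Fin n) F)
          = Matrix.single i0 i1 (1:F) * Matrix.single i1 i1 (1:F) from rfl,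
        Matrix.single_mul_single_same] at this
      simp [Matrix.single_apply_same] at this
    exact hab ((hrev b).mp hba)
end

section
/- Let R be a weakly reversible ring and let f(x) = Σᵢ aᵢxⁱ, g(x) = Σⱼ bⱼxʲ be polynomials in R[x] with f(x)g(x) = 0. Then there exists a positive integer k such that (a₀R)ᵏ g(x) = 0, i.e., every product of k elements of a₀R annihilates every coefficient of g from the left. -/
namespace Stmt15Aux

variable {R : Type*} [Ring R]

/-- the word `a * r₁ * a * r₂ * ⋯ * r_m * a` -/
def aword (a : R) (l : List R) : R := l.foldl (fun acc r => acc * r * a) a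

lemma aword_nil (a : R) : aword a ([] : List R) = a := rfl

lemma foldl_aux (a : R) (l : List R) : ∀ c : R,
    l.foldl (fun acc r => acc * r * a) (c * a) = c * aword a l := by
  induction l with
  | nil => intro c; rfl
  | cons r t ih =>
    intro c
    show t.foldl _ (c * a * r * a) = c * aword a (r :: t)
    have h2 : aword a (r :: t) = a * r * aword a t := by
      show t.foldl _ (a * r * a) = _
      rw [ih (a * r)]
    rw [show c * a * r * a = (c * (a * r)) * a by simp only [mul_assoc], ih (c * (a * r)), h2]
    simp only [mul_assoc]

lemma aword_cons (a d : R) (t : List R) : aword a (d :: t) = a * d * aword a t := by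
  show t.foldl _ (a * d * a) = _
  rw [foldl_aux a t (a * d)]

lemma aword_split (a : R) (l₁ l₂ : List R) (c : R) :
    aword a (l₁ ++ c :: l₂) = aword a l₁ * c * aword a l₂ := by
  show (l₁ ++ c :: l₂).foldl _ a = _
  rw [List.foldl_append]
  show l₂.foldl _ (aword a l₁ * c * a) = _
  exact foldl_aux a l₂ (aword a l₁ * c)

lemma aword_append_singleton (a c : R) (l : List R) :
    aword a (l ++ [c]) = aword a l * c * a := by
  show (l ++ [c]).foldl _ a = _
  rw [List.foldl_append]
  rfl

lemma exists_split (l : List R) (n : ℕ) (h : n + 1 ≤ l.length) :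
    ∃ l₁ c l₂, l = l₁ ++ c :: l₂ ∧ l₁.length = n ∧ l₂.length + n + 1 = l.length := by
  have hd : l.drop n ≠ [] := by
    intro he
    have := congrArg List.length he
    simp [List.length_drop] at this
    omega
  obtain ⟨c, l₂, hc⟩ := List.exists_cons_of_ne_nil hd
  refine ⟨l.take n, c, l₂, ?_, ?_, ?_⟩
  · rw [← hc]; exact (List.take_append_drop n l).symm
  · simp [List.length_take]; omega
  · have := congrArg List.length hc
    simp [List.length_drop] at this
    omega

/-- Square-zero elements are reversible (or zero) in a weakly reversible ring. -/
lemma revFlip (hR : WeaklyReversible R) {z : R} (hz : z * z = 0) (c : R) :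
    z * c = 0 ↔ c * z = 0 := by
  by_cases h0 : z = 0
  · subst h0; simp
  obtain ⟨m, hm, hmne, hrev⟩ := hR z h0
  have hm1 : m = 1 := by
    by_contra hne1
    apply hmne
    have h2 : z ^ m = z ^ 2 * z ^ (m - 2) := by rw [← pow_add]; congr 1; omega
    rw [h2, sq, hz, zero_mul]
  rw [hm1, pow_one] at hrev
  exact (hrev c).symm

section Core

variable (hR : WeaklyReversible R) (a x : R) (K : ℕ)
variable (hK : ∀ l : List R, K ≤ l.length → aword a l * x = 0)

include hR hK in
lemma stepF : ∀ l : List R, 2 * K + 1 ≤ l.length → ∀ w : R, x * w * aword a l = 0 := by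
  intro l hl w
  obtain ⟨l₁, c, l₂, hsp, hl₁, hl₂⟩ := exists_split l K (by omega)
  have h₁ : aword a l₁ * x = 0 := hK l₁ (by omega)
  have h₂ : aword a l₂ * x = 0 := hK l₂ (by omega)
  have hz : (x * w * aword a l₁) * (x * w * aword a l₁) = 0 := by
    have e : (x * w * aword a l₁) * (x * w * aword a l₁)
        = x * (w * ((aword a l₁ * x) * (w * aword a l₁))) := by
      simp only [mul_assoc]
    rw [e, h₁, zero_mul, mul_zero, mul_zero]
  have hcz : (c * aword a l₂) * (x * w * aword a l₁) = 0 := by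
    have e : (c * aword a l₂) * (x * w * aword a l₁)
        = c * ((aword a l₂ * x) * (w * aword a l₁)) := by
      simp only [mul_assoc]
    rw [e, h₂, zero_mul, mul_zero]
  have hzc := (revFlip hR hz (c * aword a l₂)).mpr hcz
  rw [hsp, aword_split]
  simp only [mul_assoc] at hzc ⊢
  exact hzc

include hR hK in
lemma stepP : ∀ lb : List R, 3 * K + 2 ≤ lb.length → ∀ l : List R, K ≤ l.length →
    ∀ v w s : R, aword a lb * v * x * w * aword a l * s = 0 := by
  intro lb hlb l hl v w s
  obtain ⟨l₁, c₁, rest, hsp1, hl₁, hrest⟩ := exists_split lb K (by omega)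
  obtain ⟨l₂, c₂, l₃, hsp2, hl₂, hl₃⟩ := exists_split rest K (by omega)
  have key1 : x * w * (aword a l * (s * c₁) * aword a l₂) = 0 := by
    have := stepF hR a x K hK (l ++ (s * c₁) :: l₂) (by simp; omega) w
    rwa [aword_split] at this
  have key2 : x * w * (aword a l * s * aword a l₁) = 0 := by
    have := stepF hR a x K hK (l ++ s :: l₁) (by simp; omega) w
    rwa [aword_split] at this
  have hz : (c₁ * aword a l₂ * c₂ * aword a l₃ * v * x * w * aword a l * s) *
      (c₁ * aword a l₂ * c₂ * aword a l₃ * v * x * w * aword a l * s) = 0 := by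
    have e : (c₁ * aword a l₂ * c₂ * aword a l₃ * v * x * w * aword a l * s) *
        (c₁ * aword a l₂ * c₂ * aword a l₃ * v * x * w * aword a l * s)
        = c₁ * (aword a l₂ * (c₂ * (aword a l₃ * (v *
            ((x * w * (aword a l * (s * c₁) * aword a l₂)) *
              (c₂ * (aword a l₃ * (v * (x * (w * (aword a l * s)))))))))))  := by
      simp only [mul_assoc]
    rw [e, key1, zero_mul]
    simp only [mul_zero]
  have hzc : (c₁ * aword a l₂ * c₂ * aword a l₃ * v * x * w * aword a l * s) *
      aword a l₁ = 0 := by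
    have e : (c₁ * aword a l₂ * c₂ * aword a l₃ * v * x * w * aword a l * s) * aword a l₁
        = c₁ * (aword a l₂ * (c₂ * (aword a l₃ * (v *
            (x * w * (aword a l * s * aword a l₁)))))) := by
      simp only [mul_assoc]
    rw [e, key2]
    simp only [mul_zero]
  have hfz := (revFlip hR hz (aword a l₁)).mp hzc
  rw [hsp1, aword_split, hsp2, aword_split]
  simp only [mul_assoc] at hfz ⊢
  exact hfz

include hR hK in
lemma stepFinal : ∀ lf : List R, 6 * K + 5 ≤ lf.length → ∀ v : R,
    aword a lf * v * x = 0 := by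
  intro lf hlf v
  obtain ⟨lt, d, rest, hsp1, hlt, hrest⟩ := exists_split lf K (by omega)
  obtain ⟨l₁, c₂, lbig, hsp2, hl₁, hlbig⟩ := exists_split rest (2 * K + 1) (by omega)
  have keyA : x * aword a l₁ = 0 := by
    have := stepF hR a x K hK l₁ (by omega) 1
    rwa [mul_one] at this
  have keyB : aword a lbig * v * x * aword a lt * d = 0 := by
    have := stepP hR a x K hK lbig (by omega) lt (by omega) v 1 d
    rwa [mul_one] at this
  have hz : (aword a l₁ * c₂ * aword a lbig * v * x) *
      (aword a l₁ * c₂ * aword a lbig * v * x) = 0 := by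
    have e : (aword a l₁ * c₂ * aword a lbig * v * x) *
        (aword a l₁ * c₂ * aword a lbig * v * x)
        = aword a l₁ * (c₂ * (aword a lbig * (v *
            ((x * aword a l₁) * (c₂ * (aword a lbig * (v * x))))))) := by
      simp only [mul_assoc]
    rw [e, keyA, zero_mul]
    simp only [mul_zero]
  have hzc : (aword a l₁ * c₂ * aword a lbig * v * x) * (aword a lt * d) = 0 := by
    have e : (aword a l₁ * c₂ * aword a lbig * v * x) * (aword a lt * d)
        = aword a l₁ * (c₂ * (aword a lbig * v * x * aword a lt * d)) := by
      simp only [mul_assoc]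
    rw [e, keyB]
    simp only [mul_zero]
  have hfz := (revFlip hR hz (aword a lt * d)).mp hzc
  rw [hsp1, aword_split, hsp2, aword_split]
  simp only [mul_assoc] at hfz ⊢
  exact hfz

end Core

/-- `x` is annihilated on the left by all long enough products of elements of `aR`. -/
def NN (a x : R) : Prop :=
  ∃ K : ℕ, ∀ (l : List R) (v : R), K ≤ l.length → aword a l * v * x = 0

lemma NN_zero (a : R) : NN a 0 := ⟨0, by intro l v _; rw [mul_zero]⟩

lemma NN_add {a x y : R} (hx : NN a x) (hy : NN a y) : NN a (x + y) := by
  obtain ⟨K₁, h₁⟩ := hx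
  obtain ⟨K₂, h₂⟩ := hy
  exact ⟨max K₁ K₂, fun l v hl => by
    rw [mul_add, h₁ l v (by omega), h₂ l v (by omega), add_zero]⟩

lemma NN_neg {a x : R} (hx : NN a x) : NN a (-x) := by
  obtain ⟨K, h⟩ := hx
  exact ⟨K, fun l v hl => by rw [mul_neg, h l v hl, neg_zero]⟩

lemma NN_lmul {a x : R} (r : R) (hx : NN a x) : NN a (r * x) := by
  obtain ⟨K, h⟩ := hx
  refine ⟨K, fun l v hl => ?_⟩
  have e : aword a l * v * (r * x) = aword a l * (v * r) * x := by
    simp only [mul_assoc]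
  rw [e, h l (v * r) hl]

lemma NN_of_mul_left (hR : WeaklyReversible R) {a x : R} (h : NN a (a * x)) : NN a x := by
  obtain ⟨K, hKk⟩ := h
  have hK' : ∀ l : List R, K + 1 ≤ l.length → aword a l * x = 0 := by
    intro l hl
    rcases l.eq_nil_or_concat with rfl | ⟨l', c, rfl⟩
    · simp at hl
    · rw [List.concat_eq_append, aword_append_singleton]
      have hlen : K ≤ l'.length := by
        simp [List.concat_eq_append] at hl; omega
      have := hKk l' c hlen
      simp only [mul_assoc] at this ⊢
      exact this
  exact ⟨6 * (K + 1) + 5, fun l v hl =>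
    stepFinal hR a x (K + 1) hK' l (by omega) v⟩

lemma prod_map (a : R) : ∀ (l : List R) (c : R),
    ((l ++ [c]).map (fun t => a * t)).prod = aword a l * c := by
  intro l
  induction l with
  | nil =>
    intro c
    simp only [List.nil_append, List.map_cons, List.map_nil, List.prod_cons,
      List.prod_nil, mul_one, aword_nil]
  | cons d t ih =>
    intro c
    simp only [List.cons_append, List.map_cons, List.prod_cons] at *
    rw [ih c, aword_cons]
    simp only [mul_assoc]

end Stmt15Aux

open Stmt15Aux in
/-- If `f * g = 0` over a weakly reversible ring, then there is `k > 0` such that every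
product of `k` elements of `a₀R` (where `a₀ = f.coeff 0`) annihilates `g` on the left. -/
theorem stmt_15 {R : Type*} [Ring R] (hR : WeaklyReversible R)
    (f g : Polynomial R) (h : f * g = 0) :
    ∃ k : ℕ, 0 < k ∧ ∀ r : Fin k → R, ∀ j : ℕ,
      (List.ofFn fun i => f.coeff 0 * r i).prod * g.coeff j = 0 := by
  classical
  have main : ∀ j : ℕ, NN (f.coeff 0) (g.coeff j) := by
    intro j
    induction j using Nat.strong_induction_on with
    | _ j ih =>
      apply NN_of_mul_left hR
      have hc0 : ∑ p ∈ Finset.HasAntidiagonal.antidiagonal j, f.coeff p.1 * g.coeff p.2 = 0 := by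
        have := Polynomial.coeff_mul f g j
        rw [h, Polynomial.coeff_zero] at this
        exact this.symm
      have hmem : ((0 : ℕ), j) ∈ Finset.HasAntidiagonal.antidiagonal j := by simp
      rw [← Finset.add_sum_erase _ _ hmem] at hc0
      have heq : f.coeff 0 * g.coeff j =
          -∑ p ∈ (Finset.HasAntidiagonal.antidiagonal j).erase (0, j), f.coeff p.1 * g.coeff p.2 :=
        eq_neg_of_add_eq_zero_left hc0
      rw [heq]
      apply NN_neg
      refine Finset.sum_induction _ _ (fun u v hu hv => NN_add hu hv) (NN_zero _) ?_
      intro p hp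
      rw [Finset.mem_erase, Finset.HasAntidiagonal.mem_antidiagonal] at hp
      obtain ⟨hne, hpd⟩ := hp
      rcases p with ⟨p1, p2⟩
      have hlt : p2 < j := by
        by_contra hc
        push_neg at hc
        apply hne
        have h1 : p1 + p2 = j := hpd
        have hp2 : p2 = j := by omega
        have hp1 : p1 = 0 := by omega
        rw [hp1, hp2]
      exact NN_lmul (f.coeff p1) (ih p2 hlt)
  choose Kf hKf using main
  refine ⟨(Finset.range (g.natDegree + 1)).sup Kf + 1, Nat.succ_pos _, ?_⟩
  intro r j
  have hlist : (List.ofFn fun i => f.coeff 0 * r i)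
      = (List.ofFn r).map (fun t => f.coeff 0 * t) := by
    rw [List.map_ofFn]
    rfl
  rcases (List.ofFn r).eq_nil_or_concat with he | ⟨l', c, he⟩
  · exfalso
    have := congrArg List.length he
    simp at this
  · rw [hlist, he, List.concat_eq_append, prod_map]
    by_cases hj : g.natDegree < j
    · rw [Polynomial.coeff_eq_zero_of_natDegree_lt hj, mul_zero]
    · push_neg at hj
      have hKle : Kf j ≤ (Finset.range (g.natDegree + 1)).sup Kf :=
        Finset.le_sup (Finset.mem_range.mpr (by omega))
      have hlen : Kf j ≤ l'.length := by
        have := congrArg List.length he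
        simp at this
        omega
      exact hKf j l' c hlen
end

section
/- Let R be a weakly reversible ring and f(x) = Σᵢ₌₀ᵐ aᵢxⁱ, g(x) = Σⱼ₌₀ⁿ bⱼxʲ ∈ R[x] with f(x)g(x) = 0. Then aᵢbⱼ is nilpotent for all 0 ≤ i ≤ m and 0 ≤ j ≤ n. -/
section Aux
variable {R : Type*} [Ring R]

lemma pow_stable {a : R} {n m : ℕ} (h : a ^ n = 0) (hnm : n ≤ m) : a ^ m = 0 := by
  rw [show m = n + (m - n) by omega, pow_add, h, zero_mul]

lemma sqzero_rev (hR : WeaklyReversible R) {z : R} (hz : z * z = 0) :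
    IsReversibleElem z := by
  by_cases h0 : z = 0
  · subst h0; intro b; simp
  · obtain ⟨m, hm, hne, hrev⟩ := hR z h0
    have hm1 : m = 1 := by
      by_contra hm1
      exact hne (pow_stable (n := 2) (by rw [pow_two, hz]) (by omega))
    rwa [hm1, pow_one] at hrev

lemma pow_forced_rev (hR : WeaklyReversible R) {a : R} {n γ : ℕ}
    (hn : a ^ n = 0) (hγ : n ≤ 2 * γ) : IsReversibleElem (a ^ γ) := by
  by_cases h0 : a ^ γ = 0
  · rw [h0]; intro b; simp
  · obtain ⟨m, hm, hne, hrev⟩ := hR _ h0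
    have hm1 : m = 1 := by
      by_contra hm1
      have h2 : 2 ≤ m := by omega
      refine hne ?_
      rw [← pow_mul]
      exact pow_stable hn (by nlinarith)
    rwa [hm1, pow_one] at hrev

lemma pstar (hR : WeaklyReversible R) {a : R} {n α β : ℕ}
    (hn : a ^ n = 0) (hab : n ≤ α + β) (C : R) : a ^ α * C * a ^ β = 0 := by
  rcases le_total α β with h | h
  · have hrev := pow_forced_rev hR hn (show n ≤ 2 * β by omega)
    refine (hrev (a ^ α * C)).mpr ?_
    rw [← mul_assoc, ← pow_add, pow_stable hn (by omega), zero_mul]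
  · have hrev := pow_forced_rev hR hn (show n ≤ 2 * α by omega)
    have h1 : (C * a ^ β) * a ^ α = 0 := by
      rw [mul_assoc, ← pow_add, pow_stable hn (by omega), mul_zero]
    have h2 := (hrev (C * a ^ β)).mp h1
    rw [← mul_assoc] at h2
    exact h2

/-- collection identity: `(a+b)^N = b^N + ∑_{s<N} b^s * a * (a+b)^(N-1-s)` -/
lemma expand (a b : R) : ∀ N : ℕ,
    (a + b) ^ N = b ^ N + ∑ s ∈ Finset.range N, b ^ s * a * (a + b) ^ (N - 1 - s) := by
  intro N
  induction N with
  | zero => simp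
  | succ N ih =>
    have hb : b * (a + b) ^ N
        = b ^ (N + 1) + ∑ s ∈ Finset.range N, b ^ (s + 1) * a * (a + b) ^ (N - 1 - s) := by
      rw [ih, mul_add, Finset.mul_sum, ← pow_succ']
      congr 1
      refine Finset.sum_congr rfl fun s hs => ?_
      rw [pow_succ']
      simp only [mul_assoc]
    have main : (a + b) ^ (N + 1) = a * (a + b) ^ N + b * (a + b) ^ N := by
      rw [pow_succ', add_mul]
    rw [main, hb, Finset.sum_range_succ']
    have e0 : (b : R) ^ 0 * a * (a + b) ^ (N + 1 - 1 - 0) = a * (a + b) ^ N := by simp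
    have e1 : ∀ s : ℕ, b ^ (s + 1) * a * (a + b) ^ (N + 1 - 1 - (s + 1))
        = b ^ (s + 1) * a * (a + b) ^ (N - 1 - s) := by
      intro s
      have : N + 1 - 1 - (s + 1) = N - 1 - s := by omega
      rw [this]
    simp only [e1, e0]
    abel

/-- `(x*y)^(j+1) = x * (y*x)^j * y` -/
lemma aux_pow (x y : R) : ∀ j : ℕ, (x * y) ^ (j + 1) = x * (y * x) ^ j * y := by
  intro j
  induction j with
  | zero => simp
  | succ j ih =>
    rw [pow_succ, ih, pow_succ]
    simp only [mul_assoc]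

/-- rotation preserves nilpotence -/
lemma rot {P Q : R} (h : IsNilpotent (P * Q)) : IsNilpotent (Q * P) := by
  obtain ⟨k, hk⟩ := h
  exact ⟨k + 1, by rw [aux_pow Q P k, hk, mul_zero, zero_mul]⟩

/-- L1: nilpotent times anything is nilpotent -/
lemma nil_mul (hR : WeaklyReversible R) {a : R} (ha : IsNilpotent a) (r : R) :
    IsNilpotent (a * r) := by
  by_contra hx
  obtain ⟨n, hn⟩ := ha
  set x := a * r with hxdef
  have hx0 : x ≠ 0 := by
    intro h
    exact hx ⟨1, by rw [pow_one, h]⟩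
  obtain ⟨m, hm, hmne, hmrev⟩ := hR x hx0
  have hxm : x ^ m = a * (r * x ^ (m - 1)) := by
    conv_lhs => rw [show m = 1 + (m - 1) by omega]
    rw [pow_add, pow_one, hxdef, mul_assoc]
  have D : ∀ s, s ≤ n → (x ^ m) ^ s * a ^ (n - s) = 0 := by
    intro s
    induction s with
    | zero => intro _; simpa using hn
    | succ s ih =>
      intro hs
      have prev := ih (by omega)
      have key : ((x ^ m) ^ s * a ^ (n - (s + 1))) * x ^ m = 0 := by
        nth_rewrite 2 [hxm]
        rw [← mul_assoc]
        have e1 : (x ^ m) ^ s * a ^ (n - (s + 1)) * a = (x ^ m) ^ s * a ^ (n - s) := by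
          rw [mul_assoc, ← pow_succ]
          congr 2
          omega
        rw [e1, prev, zero_mul]
      have := (hmrev _).mp key
      rw [← mul_assoc, ← pow_succ'] at this
      exact this
  have final := D n le_rfl
  rw [Nat.sub_self, pow_zero, mul_one, ← pow_mul] at final
  exact hx ⟨m * n, final⟩

/-- anything times nilpotent is nilpotent -/
lemma mul_nil (hR : WeaklyReversible R) {a : R} (ha : IsNilpotent a) (r : R) :
    IsNilpotent (r * a) :=
  rot (nil_mul hR ha r)

/-- L3 : `A*B` nilpotent implies `A*Z*B` nilpotent -/
lemma sandwich (hR : WeaklyReversible R) {A B : R} (h : IsNilpotent (A * B)) (Z : R) :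
    IsNilpotent (A * Z * B) := by
  have hBAZ : IsNilpotent (B * A * Z) := nil_mul hR (rot h) Z
  obtain ⟨k, hk⟩ := hBAZ
  refine ⟨k + 1, ?_⟩
  have := aux_pow (A * Z) B k
  rw [this]
  have e : B * (A * Z) = B * A * Z := by rw [mul_assoc]
  rw [e, hk, mul_zero, zero_mul]

end Aux

section Machine
variable {R : Type*} [Ring R]

/-- base of the descent: `a^(n-1) * c * (a+b)^p = 0` -/
lemma ebase (hR : WeaklyReversible R) {a b : R} {n p : ℕ}
    (ha : a ^ n = 0) (hb : b ^ p = 0) (hn : 1 ≤ n) (c : R) :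
    a ^ (n - 1) * c * (a + b) ^ p = 0 := by
  rw [expand a b p, mul_add, Finset.mul_sum]
  have h1 : a ^ (n - 1) * c * b ^ p = 0 := by rw [hb, mul_zero]
  rw [h1, zero_add]
  refine Finset.sum_eq_zero fun s hs => ?_
  have hz : a ^ (n - 1) * (c * b ^ s) * a ^ 1 = 0 :=
    pstar hR ha (by omega) _
  calc a ^ (n - 1) * c * (b ^ s * a * (a + b) ^ (p - 1 - s))
      = (a ^ (n - 1) * (c * b ^ s) * a ^ 1) * (a + b) ^ (p - 1 - s) := by
        rw [pow_one]; simp only [mul_assoc]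
    _ = 0 := by rw [hz, zero_mul]

/-- descent step -/
lemma estep (hR : WeaklyReversible R) {a b : R} {p i : ℕ}
    (hb : b ^ p = 0)
    (prev : ∀ c : R, ∃ N, a ^ (i + 1) * c * (a + b) ^ N = 0) (c : R) :
    ∃ N, a ^ i * c * (a + b) ^ N = 0 := by
  obtain ⟨N₀, h₀⟩ := prev c
  set x := a + b with hx
  set y := a ^ i * c * x ^ N₀ with hy
  have hay : a * y = 0 := by
    rw [hy, ← mul_assoc, ← mul_assoc, ← pow_succ']
    exact h₀
  -- key: y * (c₁ * a) * (c₂ * a) = 0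
  have key : ∀ c₁ c₂ : R, y * (c₁ * a) * (c₂ * a) = 0 := by
    intro c₁ c₂
    have e : a * (y * (c₁ * a)) = 0 := by rw [← mul_assoc, hay, zero_mul]
    have hζ : (y * (c₁ * a)) * (y * (c₁ * a)) = 0 := by
      calc (y * (c₁ * a)) * (y * (c₁ * a))
          = y * c₁ * (a * (y * (c₁ * a))) := by simp only [mul_assoc]
        _ = 0 := by rw [e, mul_zero]
    have hrev := sqzero_rev hR hζ
    have hX : (c₂ * a) * (y * (c₁ * a)) = 0 := by
      calc (c₂ * a) * (y * (c₁ * a)) = c₂ * (a * (y * (c₁ * a))) := by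
            simp only [mul_assoc]
        _ = 0 := by rw [e, mul_zero]
    exact (hrev (c₂ * a)).mp hX
  -- endgame : y * x^(2p) = 0
  have hend : y * x ^ (2 * p) = 0 := by
    rw [hx, expand a b (2 * p), mul_add, Finset.mul_sum]
    have h1 : y * b ^ (2 * p) = 0 := by
      rw [pow_stable hb (by omega), mul_zero]
    rw [h1, zero_add]
    refine Finset.sum_eq_zero fun s hs => ?_
    rcases le_or_gt p s with hps | hps
    · rw [pow_stable hb hps]
      simp
    · -- s < p : expand the inner power
      set M := 2 * p - 1 - s with hM
      have hMp : p ≤ M := by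
        have := Finset.mem_range.mp hs
        omega
      rw [expand a b M, mul_add, Finset.mul_sum, mul_add, Finset.mul_sum]
      have h2 : y * (b ^ s * a * b ^ M) = 0 := by
        rw [pow_stable hb hMp]
        simp
      rw [h2, zero_add]
      refine Finset.sum_eq_zero fun s' hs' => ?_
      have hk := key (b ^ s) (b ^ s')
      calc y * (b ^ s * a * (b ^ s' * a * (a + b) ^ (M - 1 - s')))
          = (y * (b ^ s * a) * (b ^ s' * a)) * (a + b) ^ (M - 1 - s') := by
            simp only [mul_assoc]
        _ = 0 := by rw [hk, zero_mul]
  exact ⟨N₀ + 2 * p, by rw [pow_add, ← mul_assoc, ← hy, hend]⟩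

/-- half : `∃ N, a * (a+b)^N = 0` -/
lemma half (hR : WeaklyReversible R) {a b : R} {n p : ℕ}
    (ha : a ^ n = 0) (hb : b ^ p = 0) (hn : 2 ≤ n) :
    ∃ N, a * (a + b) ^ N = 0 := by
  have desc : ∀ d : ℕ, ∀ i : ℕ, 1 ≤ i → i + d = n - 1 →
      ∀ c : R, ∃ N, a ^ i * c * (a + b) ^ N = 0 := by
    intro d
    induction d with
    | zero =>
      intro i h1 h0 c
      have : i = n - 1 := by omega
      subst this
      exact ⟨p, ebase hR ha hb (by omega) c⟩
    | succ d ih =>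
      intro i h1 hsum c
      have prev : ∀ c : R, ∃ N, a ^ (i + 1) * c * (a + b) ^ N = 0 :=
        ih (i + 1) (by omega) (by omega)
      exact estep hR hb prev c
  obtain ⟨N, hN⟩ := desc (n - 2) 1 le_rfl (by omega) 1
  refine ⟨N, ?_⟩
  rwa [pow_one, mul_one] at hN

/-- additivity of nilpotents -/
lemma nil_add (hR : WeaklyReversible R) {a b : R}
    (ha : IsNilpotent a) (hb : IsNilpotent b) : IsNilpotent (a + b) := by
  obtain ⟨n₀, hn₀⟩ := ha
  obtain ⟨p₀, hp₀⟩ := hb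
  have ha' : a ^ (n₀ + 2) = 0 := pow_stable hn₀ (by omega)
  have hb' : b ^ (p₀ + 2) = 0 := pow_stable hp₀ (by omega)
  obtain ⟨Na, hNa⟩ := half hR ha' hb' (by omega)
  obtain ⟨Nb, hNb⟩ := half hR hb' ha' (by omega)
  rw [add_comm b a] at hNb
  set N := max Na Nb with hN
  have hA : a * (a + b) ^ N = 0 := by
    rw [show N = Na + (N - Na) by omega, pow_add, ← mul_assoc, hNa, zero_mul]
  have hB : b * (a + b) ^ N = 0 := by
    rw [show N = Nb + (N - Nb) by omega, pow_add, ← mul_assoc, hNb, zero_mul]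
  exact ⟨N + 1, by rw [pow_succ', add_mul, hA, hB, add_zero]⟩

end Machine

section Main
variable {R : Type*} [Ring R]

/-- finite sums of nilpotents are nilpotent -/
lemma nil_sum (hR : WeaklyReversible R) {ι : Type*} (s : Finset ι) (F : ι → R)
    (h : ∀ v ∈ s, IsNilpotent (F v)) : IsNilpotent (∑ v ∈ s, F v) := by
  classical
  induction s using Finset.induction with
  | empty => exact ⟨1, by simp⟩
  | @insert v s' hx ih =>
    rw [Finset.sum_insert hx]
    exact nil_add hR (h v (Finset.mem_insert_self v s'))
      (ih fun w hw => h w (Finset.mem_insert_of_mem hw))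

end Main

/-- If `f * g = 0` over a weakly reversible ring, then all products of coefficients
`aᵢ * bⱼ` are nilpotent. -/
theorem stmt_16 {R : Type*} [Ring R] (hR : WeaklyReversible R)
    (f g : Polynomial R) (h : f * g = 0) :
    ∀ i j : ℕ, IsNilpotent (f.coeff i * g.coeff j) := by
  have hco : ∀ k : ℕ, ∑ v ∈ Finset.HasAntidiagonal.antidiagonal k, f.coeff v.1 * g.coeff v.2 = 0 := by
    intro k
    have := congrArg (fun q : Polynomial R => q.coeff k) h
    simpa [Polynomial.coeff_mul] using this
  suffices H : ∀ k : ℕ, ∀ i j : ℕ, i + j = k → IsNilpotent (f.coeff i * g.coeff j) by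
    intro i j
    exact H (i + j) i j rfl
  intro k
  induction k using Nat.strong_induction_on with
  | _ k IHout =>
    suffices Hin : ∀ j : ℕ, ∀ i : ℕ, i + j = k → IsNilpotent (f.coeff i * g.coeff j) by
      intro i j hij
      exact Hin j i hij
    intro j
    induction j using Nat.strong_induction_on with
    | _ j IHin =>
      intro i hij
      have hmem : (i, j) ∈ Finset.HasAntidiagonal.antidiagonal k :=
        Finset.HasAntidiagonal.mem_antidiagonal.mpr hij
      have hsum : ∑ v ∈ Finset.HasAntidiagonal.antidiagonal k,
          f.coeff v.1 * g.coeff v.2 * g.coeff j = 0 := by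
        rw [← Finset.sum_mul, hco k, zero_mul]
      have hsplit : f.coeff i * g.coeff j * g.coeff j
          = -∑ v ∈ (Finset.HasAntidiagonal.antidiagonal k).erase (i, j),
              f.coeff v.1 * g.coeff v.2 * g.coeff j := by
        have h2 := Finset.add_sum_erase (Finset.HasAntidiagonal.antidiagonal k)
          (fun v : ℕ × ℕ => f.coeff v.1 * g.coeff v.2 * g.coeff j) hmem
        rw [hsum] at h2
        simpa using eq_neg_of_add_eq_zero_left h2
      have hterm : ∀ v ∈ (Finset.HasAntidiagonal.antidiagonal k).erase (i, j),
          IsNilpotent (f.coeff v.1 * g.coeff v.2 * g.coeff j) := by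
        intro v hv
        obtain ⟨hne, hvmem⟩ := Finset.mem_erase.mp hv
        have hvk : v.1 + v.2 = k := Finset.HasAntidiagonal.mem_antidiagonal.mp hvmem
        rcases lt_trichotomy v.2 j with h2 | h2 | h2
        · exact nil_mul hR (IHin v.2 h2 v.1 hvk) _
        · exfalso
          apply hne
          have e1 : v.1 = i := by omega
          exact Prod.ext e1 h2
        · have hlt : v.1 + j < k := by omega
          exact sandwich hR (IHout (v.1 + j) hlt v.1 j rfl) _
      have hu2 : IsNilpotent (f.coeff i * g.coeff j * g.coeff j) := by
        rw [hsplit]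
        exact (nil_sum hR _ _ hterm).neg
      -- conclude : u * u nilpotent where u = f.coeff i * g.coeff j
      have husq : IsNilpotent
          (f.coeff i * g.coeff j * (f.coeff i * g.coeff j)) := by
        have h3 := sandwich hR hu2 (f.coeff i)
        have e : f.coeff i * g.coeff j * f.coeff i * g.coeff j
            = f.coeff i * g.coeff j * (f.coeff i * g.coeff j) := by
          rw [mul_assoc]
        rwa [e] at h3
      obtain ⟨K, hK⟩ := husq
      exact ⟨2 * K, by rw [pow_mul, pow_two, hK]⟩
end

section
/- Every weakly reversible ring is right McCoy and left McCoy: if f(x), g(x) ∈ R[x] are nonzero polynomials with f(x)g(x) = 0, then there exists a nonzero c ∈ R with f(x)·c = 0, and there exists a nonzero d ∈ R with d·g(x) = 0. -/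
section Aux

variable {R : Type*} [Ring R]

lemma isReversibleElem_zero : IsReversibleElem (0 : R) := by
  intro b; simp

/-- In a weakly reversible ring, any square-zero element is reversible. -/
lemma rev_of_sq_zero (hR : WeaklyReversible R) {x : R} (hx : x * x = 0) :
    IsReversibleElem x := by
  by_cases h0 : x = 0
  · subst h0; exact isReversibleElem_zero
  · obtain ⟨m, hm, hxm, hrev⟩ := hR x h0
    match m, hm with
    | 1, _ => simpa using hrev
    | (k+2), _ =>
      exfalso
      apply hxm
      have : x ^ (k + 2) = x ^ k * (x * x) := by
        rw [pow_succ, pow_succ, mul_assoc]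
      rw [this, hx, mul_zero]

/-- Powers of a reversible element are reversible. -/
lemma rev_pow {e : R} (he : IsReversibleElem e) : ∀ t : ℕ, 1 ≤ t → IsReversibleElem (e ^ t) := by
  intro t
  induction t with
  | zero => intro h; exact absurd h (by norm_num)
  | succ t ih =>
    intro _
    by_cases ht : 1 ≤ t
    · have iht := ih ht
      intro b
      constructor
      · intro hb
        -- b * e^(t+1) = 0
        have h1 : (b * e ^ t) * e = 0 := by rw [mul_assoc, ← pow_succ]; exact hb
        have h2 : e * (b * e ^ t) = 0 := (he _).mp h1
        have h3 : (e * b) * e ^ t = 0 := by rw [mul_assoc]; exact h2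
        have h4 : e ^ t * (e * b) = 0 := (iht _).mp h3
        calc e ^ (t+1) * b = e ^ t * (e * b) := by rw [pow_succ, mul_assoc]
        _ = 0 := h4
      · intro hb
        have h1 : e * (e ^ t * b) = 0 := by
          rw [← mul_assoc, ← pow_succ']; exact hb
        have h2 : (e ^ t * b) * e = 0 := (he _).mpr h1
        have h3 : e ^ t * (b * e) = 0 := by rw [← mul_assoc]; exact h2
        have h4 : (b * e) * e ^ t = 0 := (iht _).mpr h3
        calc b * e ^ (t+1) = (b * e) * e ^ t := by rw [pow_succ', ← mul_assoc]
        _ = 0 := h4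
    · have ht0 : t = 0 := by omega
      subst ht0
      simpa using he

open Polynomial in
/-- Workhorse: isolate the top term in the coefficient equation of `f * h = 0`
at degree `i + h.natDegree`, after right multiplication by `z`. -/
lemma coeff_isolate (f h : R[X]) (hfh : f * h = 0) (i : ℕ) (z : R)
    (Hmid : ∀ p q : ℕ, p + q = i + h.natDegree → i < p → f.coeff p * h.coeff q * z = 0) :
    f.coeff i * h.coeff h.natDegree * z = 0 := by
  classical
  have h1 : (f * h).coeff (i + h.natDegree) = 0 := by rw [hfh]; simp
  rw [coeff_mul] at h1
  have h2 : ∑ x ∈ Finset.HasAntidiagonal.antidiagonal (i + h.natDegree),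
      f.coeff x.1 * h.coeff x.2 * z = 0 := by
    rw [← Finset.sum_mul, h1, zero_mul]
  have h3 := Finset.sum_eq_single_of_mem
    (f := fun x : ℕ × ℕ => f.coeff x.1 * h.coeff x.2 * z)
    (⟨i, h.natDegree⟩ : ℕ × ℕ)
    (Finset.HasAntidiagonal.mem_antidiagonal.mpr rfl)
    (by
      rintro ⟨p, q⟩ hmem hne
      rw [Finset.HasAntidiagonal.mem_antidiagonal] at hmem
      simp only at hmem ⊢
      rcases lt_trichotomy p i with hlt | heq | hgt
      · have hq : h.natDegree < q := by omega
        rw [Polynomial.coeff_eq_zero_of_natDegree_lt hq, mul_zero, zero_mul]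
      · exfalso; apply hne; have : q = h.natDegree := by omega
        simp [heq, this]
      · exact Hmid p q hmem hgt)
  rw [h3] at h2
  exact h2

open Polynomial in
/-- Weakly reversible rings are right McCoy. -/
theorem right_mccoy (hR : WeaklyReversible R) (f g : R[X]) (hg : g ≠ 0)
    (hfg : f * g = 0) : ∃ c : R, c ≠ 0 ∧ ∀ i : ℕ, f.coeff i * c = 0 := by
  classical
  have hex : ∃ d : ℕ, ∃ p : R[X], p ≠ 0 ∧ f * p = 0 ∧ p.natDegree = d :=
    ⟨g.natDegree, g, hg, hfg, rfl⟩
  obtain ⟨h, hh0, hfh, hdeg⟩ := Nat.find_spec hex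
  have hmin : ∀ p : R[X], f * p = 0 → p.natDegree < h.natDegree → p = 0 := by
    intro p hp hlt
    by_contra hne
    rw [hdeg] at hlt
    exact Nat.find_min hex hlt ⟨p, hne, hp, rfl⟩
  -- nontriviality
  have hnontriv : (1 : R) ≠ 0 := by
    intro h10
    have : Subsingleton R := subsingleton_of_zero_eq_one h10.symm
    have : g = 0 := Subsingleton.elim _ _
    exact hg this
  by_cases hd0 : h.natDegree = 0
  · -- h is a nonzero constant that annihilates f
    have hdh : h.natDegree = 0 := hd0
    have hc0 : h.coeff 0 ≠ 0 := by
      intro hc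
      apply hh0
      have := Polynomial.eq_C_of_natDegree_eq_zero hdh
      rw [this, hc, map_zero]
    refine ⟨h.coeff 0, hc0, fun i => ?_⟩
    have hh : h = Polynomial.C (h.coeff 0) := Polynomial.eq_C_of_natDegree_eq_zero hdh
    have : (f * h).coeff i = 0 := by rw [hfh]; simp
    rw [hh, Polynomial.coeff_mul_C] at this
    exact this
  · -- main case
    set n := f.natDegree with hn
    set B₀ := h.coeff h.natDegree with hB₀
    have hB₀ne : B₀ ≠ 0 := by
      rw [hB₀]
      rw [Polynomial.coeff_natDegree]
      exact Polynomial.leadingCoeff_ne_zero.mpr hh0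
    by_cases hnil : ∃ t : ℕ, B₀ ^ t = 0
    case neg =>
      -- B₀ is not nilpotent
      push_neg at hnil
      obtain ⟨k, hk, hek, herev⟩ := hR B₀ hB₀ne
      set e := B₀ ^ k with he
      have hepow : ∀ K : ℕ, 1 ≤ K → IsReversibleElem (e ^ K) := rev_pow herev
      have heK : ∀ K : ℕ, e ^ K ≠ 0 := by
        intro K
        rw [he, ← pow_mul]
        exact hnil _
      -- absorption: from a * e^K = 0 get (a * x) * e^K = 0
      have habsorb : ∀ (K : ℕ), 1 ≤ K → ∀ a x : R, a * e ^ K = 0 → a * x * e ^ K = 0 := by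
        intro K hK a x ha
        have h1 : e ^ K * a = 0 := (hepow K hK _).mp ha
        have h2 : e ^ K * (a * x) = 0 := by rw [← mul_assoc, h1, zero_mul]
        exact (hepow K hK _).mpr h2
      have main : ∀ jj : ℕ, ∃ K : ℕ, 1 ≤ K ∧ ∀ p : ℕ, n - jj ≤ p → f.coeff p * e ^ K = 0 := by
        intro jj
        induction jj with
        | zero =>
          refine ⟨1, le_refl 1, fun p hp => ?_⟩
          rcases eq_or_lt_of_le hp with hpe | hpl
          · -- p = n
            have key := coeff_isolate f h hfh n (B₀ ^ (k - 1)) (by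
              intro p' q' hsum hlt
              have : f.coeff p' = 0 := Polynomial.coeff_eq_zero_of_natDegree_lt hlt
              rw [this, zero_mul, zero_mul])
            -- key : f.coeff n * B₀ * B₀^(k-1) = 0
            have : f.coeff n * e ^ 1 = 0 := by
              rw [pow_one, he]
              have hBk : B₀ * B₀ ^ (k - 1) = B₀ ^ k := by
                rw [← pow_succ']
                congr 1
                omega
              rw [← hBk, ← mul_assoc]
              exact key
            rw [← hpe]
            exact this
          · -- p > n : coefficient of f is 0
            have : f.coeff p = 0 := Polynomial.coeff_eq_zero_of_natDegree_lt hpl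
            rw [this, zero_mul]
        | succ jj ih =>
          obtain ⟨K, hK1, hK⟩ := ih
          refine ⟨K + 1, by omega, fun p hp => ?_⟩
          by_cases hp2 : n - jj ≤ p
          · have := hK p hp2
            rw [pow_succ, ← mul_assoc, this, zero_mul]
          · -- p = n - (jj + 1)
            have key := coeff_isolate f h hfh p (B₀ ^ (k - 1) * e ^ K) (by
              intro p' q' hsum hlt
              have hp' : n - jj ≤ p' := by omega
              have h1 : f.coeff p' * e ^ K = 0 := hK p' hp'
              have h2 : f.coeff p' * (h.coeff q' * B₀ ^ (k - 1)) * e ^ K = 0 :=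
                habsorb K hK1 _ _ h1
              calc f.coeff p' * h.coeff q' * (B₀ ^ (k - 1) * e ^ K)
                  = f.coeff p' * (h.coeff q' * B₀ ^ (k - 1)) * e ^ K := by
                    rw [← mul_assoc, mul_assoc (f.coeff p')]
                _ = 0 := h2
            )
            -- key : f.coeff p * B₀ * (B₀^(k-1) * e^K) = 0
            have : f.coeff p * e ^ (K + 1) = 0 := by
              have hBk : B₀ * (B₀ ^ (k - 1) * e ^ K) = e ^ (K + 1) := by
                rw [← mul_assoc, ← pow_succ']
                have : k - 1 + 1 = k := by omega
                rw [this, ← he, ← pow_succ']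
              rw [← hBk, ← mul_assoc]
              exact key
            exact this
      obtain ⟨K, hK1, hK⟩ := main n
      refine ⟨e ^ K, heK K, fun i => hK i (by omega)⟩
    case pos =>
      -- B₀ is nilpotent; normalize the leading coefficient to a square-zero element
      obtain ⟨ν, hν⟩ : ∃ ν : ℕ, B₀ ^ ν = 0 ∧ ∀ t < ν, B₀ ^ t ≠ 0 := by
        refine ⟨Nat.find hnil, Nat.find_spec hnil, fun t ht => Nat.find_min hnil ht⟩
      obtain ⟨hνz, hνmin⟩ := hν
      have hν2 : 2 ≤ ν := by
        by_contra hlt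
        interval_cases ν
        · rw [pow_zero] at hνz; exact hnontriv hνz
        · rw [pow_one] at hνz; exact hB₀ne hνz
      set h' := h * Polynomial.C (B₀ ^ (ν - 2)) with hh'
      set B := B₀ ^ (ν - 1) with hB
      have hBne : B ≠ 0 := hνmin _ (by omega)
      have hBB : B * B = 0 := by
        rw [hB, ← pow_add]
        have : ν - 1 + (ν - 1) = ν + (ν - 2) := by omega
        rw [this, pow_add, hνz, zero_mul]
      have hcoeff' : ∀ j : ℕ, h'.coeff j = h.coeff j * B₀ ^ (ν - 2) := by
        intro j; rw [hh', Polynomial.coeff_mul_C]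
      have htop' : h'.coeff h.natDegree = B := by
        rw [hcoeff', ← hB₀, hB, ← pow_succ']
        congr 1
        omega
      have hfh' : f * h' = 0 := by rw [hh', ← mul_assoc, hfh, zero_mul]
      have hdeg' : h'.natDegree = h.natDegree := by
        apply le_antisymm
        · calc h'.natDegree ≤ h.natDegree + (Polynomial.C (B₀ ^ (ν - 2))).natDegree :=
              Polynomial.natDegree_mul_le
          _ = h.natDegree := by rw [Polynomial.natDegree_C, add_zero]
        · apply Polynomial.le_natDegree_of_ne_zero
          rw [htop']
          exact hBne
      have hh'0 : h' ≠ 0 := by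
        intro hz
        apply hBne
        rw [← htop', hz, Polynomial.coeff_zero]
      -- (★★): if B * r = 0 then every coefficient of h' kills r
      have hstar : ∀ r : R, B * r = 0 → ∀ j : ℕ, h'.coeff j * r = 0 := by
        intro r hr j
        set p := h' * Polynomial.C r with hp
        have hfp : f * p = 0 := by rw [hp, ← mul_assoc, hfh', zero_mul]
        have hpc : ∀ q : ℕ, p.coeff q = h'.coeff q * r := by
          intro q; rw [hp, Polynomial.coeff_mul_C]
        have hptop : p.coeff h'.natDegree = 0 := by
          rw [hpc, hdeg', htop', hr]
        have hpdeg : p.natDegree ≤ h'.natDegree := by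
          calc p.natDegree ≤ h'.natDegree + (Polynomial.C r).natDegree :=
            Polynomial.natDegree_mul_le
          _ = h'.natDegree := by simp
        have hp0 : p = 0 := by
          by_contra hne
          have hlt : p.natDegree < h.natDegree := by
            rcases lt_or_eq_of_le hpdeg with hl | he
            · omega
            · exfalso
              have hlc := Polynomial.leadingCoeff_ne_zero.mpr hne
              rw [← Polynomial.coeff_natDegree, he, hptop] at hlc
              exact hlc rfl
          have := hmin p hfp hlt
          exact hne this
        have := hpc j
        rw [hp0, Polynomial.coeff_zero] at this
        exact this.symm
      have hrevB : IsReversibleElem B := rev_of_sq_zero hR hBB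
      have hcB : ∀ j, h'.coeff j * B = 0 := fun j => hstar B hBB j
      have hBc : ∀ j, B * h'.coeff j = 0 := fun j => (hrevB _).mp (hcB j)
      have hcc : ∀ l j, h'.coeff l * h'.coeff j = 0 := fun l j => hstar _ (hBc j) l
      have hcrev : ∀ j, IsReversibleElem (h'.coeff j) := fun j => rev_of_sq_zero hR (hcc j j)
      -- main descending induction
      have main : ∀ jj : ℕ, ∀ p : ℕ, n - jj ≤ p → ∀ q : ℕ, h'.coeff q * f.coeff p = 0 := by
        intro jj
        induction jj with
        | zero =>
          intro p hp q
          rcases eq_or_lt_of_le hp with hpe | hpl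
          · have key := coeff_isolate f h' hfh' n 1 (by
              intro p' q' hsum hlt
              have : f.coeff p' = 0 := Polynomial.coeff_eq_zero_of_natDegree_lt hlt
              rw [this, zero_mul, zero_mul])
            rw [mul_one, hdeg', htop'] at key
            -- key : f.coeff n * B = 0
            have hBf : B * f.coeff n = 0 := (hrevB _).mp key
            have := hstar _ hBf q
            rw [← hpe]
            exact this
          · have : f.coeff p = 0 := Polynomial.coeff_eq_zero_of_natDegree_lt hpl
            rw [this, mul_zero]
        | succ jj ih =>
          intro p hp q
          by_cases hp2 : n - jj ≤ p
          · exact ih p hp2 q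
          · have key := coeff_isolate f h' hfh' p 1 (by
              intro p' q' hsum hlt
              have hp' : n - jj ≤ p' := by omega
              have h1 : h'.coeff q' * f.coeff p' = 0 := ih p' hp' q'
              have h2 : f.coeff p' * h'.coeff q' = 0 := (hcrev q' _).mpr h1
              rw [mul_one] at *
              exact h2)
            rw [mul_one, hdeg', htop'] at key
            have hBf : B * f.coeff p = 0 := (hrevB _).mp key
            exact hstar _ hBf q
      refine ⟨B, hBne, fun i => ?_⟩
      have h1 : h'.coeff h.natDegree * f.coeff i = 0 := main n i (by omega) _
      have h2 : f.coeff i * h'.coeff h.natDegree = 0 := (hcrev _ _).mpr h1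
      rw [htop'] at h2
      exact h2

open Polynomial MulOpposite in
lemma weaklyReversible_op (hR : WeaklyReversible R) : WeaklyReversible Rᵐᵒᵖ := by
  intro a ha
  have hun : unop a ≠ 0 := by
    intro h; apply ha
    rw [← op_unop a, h, op_zero]
  obtain ⟨m, hm, h1, h2⟩ := hR (unop a) hun
  refine ⟨m, hm, ?_, ?_⟩
  · intro h
    apply h1
    have : unop (a ^ m) = (0 : R) := by rw [h, unop_zero]
    rwa [unop_pow] at this
  · intro b
    constructor
    · intro hb
      have h3 : unop (b * a ^ m) = 0 := by rw [hb, unop_zero]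
      rw [unop_mul, unop_pow] at h3
      -- h3 : unop a ^ m * unop b = 0
      have h4 : unop b * unop a ^ m = 0 := (h2 _).mpr h3
      have : a ^ m * b = op (unop b * unop (a ^ m)) := by
        rw [op_mul, op_unop, op_unop]
      rw [this, unop_pow, h4, op_zero]
    · intro hb
      have h3 : unop (a ^ m * b) = 0 := by rw [hb, unop_zero]
      rw [unop_mul, unop_pow] at h3
      -- h3 : unop b * unop a ^ m = 0
      have h4 : unop a ^ m * unop b = 0 := (h2 _).mp h3
      have : b * a ^ m = op (unop (a ^ m) * unop b) := by
        rw [op_mul, op_unop, op_unop]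
      rw [this, unop_pow, h4, op_zero]

end Aux

/-- Every weakly reversible ring is left and right McCoy. -/
theorem stmt_18 {R : Type*} [Ring R] (hR : WeaklyReversible R)
    (f g : Polynomial R) (hf : f ≠ 0) (hg : g ≠ 0) (h : f * g = 0) :
    (∃ c : R, c ≠ 0 ∧ ∀ i : ℕ, f.coeff i * c = 0) ∧
    (∃ d : R, d ≠ 0 ∧ ∀ j : ℕ, d * g.coeff j = 0) := by
  constructor
  · exact right_mccoy hR f g hg h
  · -- pass to the opposite ring
    classical
    set Φ := Polynomial.opRingEquiv R with hΦ
    set F := Φ (MulOpposite.op f) with hF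
    set G := Φ (MulOpposite.op g) with hG
    have hGF : G * F = 0 := by
      rw [hG, hF, ← map_mul, ← MulOpposite.op_mul, h, MulOpposite.op_zero, map_zero]
    have hFne : F ≠ 0 := by
      intro hz
      apply hf
      have : MulOpposite.op f = (0 : (Polynomial R)ᵐᵒᵖ) := by
        apply Φ.injective
        rw [map_zero, ← hF]
        exact hz
      rw [← MulOpposite.unop_op f, this, MulOpposite.unop_zero]
    obtain ⟨c, hc, hall⟩ := right_mccoy (weaklyReversible_op hR) G F hFne hGF
    refine ⟨MulOpposite.unop c, ?_, fun j => ?_⟩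
    · intro hz
      apply hc
      rw [← MulOpposite.op_unop c, hz, MulOpposite.op_zero]
    · have h1 := hall j
      rw [hG, Polynomial.coeff_opRingEquiv, MulOpposite.unop_op] at h1
      -- h1 : op (g.coeff j) * c = 0
      have : MulOpposite.op (MulOpposite.unop c * g.coeff j) = (0 : Rᵐᵒᵖ) := by
        rw [MulOpposite.op_mul, MulOpposite.op_unop]
        exact h1
      have := congrArg MulOpposite.unop this
      rwa [MulOpposite.unop_op, MulOpposite.unop_zero] at this
end

section
/- Every reversible ring is weakly reversible, but the converse fails: there exists a weakly reversible ring which is not reversible. Specifically, for a field F, the quotient R = F⟨x,y⟩/(xy, y²x, yx², x³, y³) is weakly reversible but satisfies x·y = 0 while y·x ≠ 0 in R. -/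
def IsReversibleRing (R : Type*) [Ring R] : Prop :=
  ∀ a b : R, a * b = 0 → b * a = 0

/-- The generator `x` of the free algebra `F⟨x,y⟩`. -/
noncomputable def genX (F : Type*) [Field F] : FreeAlgebra F (Fin 2) := FreeAlgebra.ι F 0

/-- The generator `y` of the free algebra `F⟨x,y⟩`. -/
noncomputable def genY (F : Type*) [Field F] : FreeAlgebra F (Fin 2) := FreeAlgebra.ι F 1

/-- The relations `xy = 0`, `y²x = 0`, `yx² = 0`, `x³ = 0`, `y³ = 0`; `RingQuot` of this
relation is the quotient of `F⟨x,y⟩` by the two-sided ideal generated by these elements. -/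
def theRel (F : Type*) [Field F] : FreeAlgebra F (Fin 2) → FreeAlgebra F (Fin 2) → Prop :=
  fun a b => b = 0 ∧
    (a = genX F * genY F ∨ a = genY F * genY F * genX F ∨ a = genY F * genX F * genX F ∨
     a = genX F * genX F * genX F ∨ a = genY F * genY F * genY F)

open Matrix

section Aux
variable (F : Type*) [Field F]

/-! ### A matrix model: the left regular representation on the basis 1, x, y, x², y², yx -/

noncomputable def XM : Matrix (Fin 6) (Fin 6) F := Matrix.single 1 0 1 + Matrix.single 3 1 1
noncomputable def YM : Matrix (Fin 6) (Fin 6) F :=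
  Matrix.single 2 0 1 + Matrix.single 5 1 1 + Matrix.single 4 2 1

lemma hXY : XM F * YM F = 0 := by
  simp [XM, YM, mul_add, add_mul, Matrix.single_mul_single_of_ne, Matrix.single_mul_single_same]
lemma hYX : YM F * XM F = Matrix.single 5 0 1 := by
  simp [XM, YM, mul_add, add_mul, Matrix.single_mul_single_of_ne, Matrix.single_mul_single_same]
lemma hXX : XM F * XM F = Matrix.single 3 0 1 := by
  simp [XM, mul_add, add_mul, Matrix.single_mul_single_of_ne, Matrix.single_mul_single_same]
lemma hYY : YM F * YM F = Matrix.single 4 0 1 := by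
  simp [YM, mul_add, add_mul, Matrix.single_mul_single_of_ne, Matrix.single_mul_single_same]
lemma hYYX : YM F * YM F * XM F = 0 := by
  rw [hYY]; simp [XM, mul_add, add_mul, Matrix.single_mul_single_of_ne, Matrix.single_mul_single_same]
lemma hYXX : YM F * XM F * XM F = 0 := by
  rw [hYX]; simp [XM, mul_add, add_mul, Matrix.single_mul_single_of_ne, Matrix.single_mul_single_same]
lemma hXXX : XM F * XM F * XM F = 0 := by
  rw [hXX]; simp [XM, mul_add, add_mul, Matrix.single_mul_single_of_ne, Matrix.single_mul_single_same]
lemma hYYY : YM F * YM F * YM F = 0 := by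
  rw [hYY]; simp [YM, mul_add, add_mul, Matrix.single_mul_single_of_ne, Matrix.single_mul_single_same]

noncomputable def phi : FreeAlgebra F (Fin 2) →ₐ[F] Matrix (Fin 6) (Fin 6) F :=
  FreeAlgebra.lift F ![XM F, YM F]

lemma phi_genX : phi F (genX F) = XM F := by simp [phi, genX]
lemma phi_genY : phi F (genY F) = YM F := by simp [phi, genY]

lemma phi_rel : ∀ ⦃a b⦄, theRel F a b → phi F a = phi F b := by
  rintro a b ⟨rfl, h⟩
  rcases h with rfl | rfl | rfl | rfl | rfl <;>
    simp [_root_.map_mul, phi_genX, phi_genY, hXY, hYYX, hYXX, hXXX, hYYY]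

noncomputable def phibar : RingQuot (theRel F) →ₐ[F] Matrix (Fin 6) (Fin 6) F :=
  RingQuot.liftAlgHom F ⟨phi F, phi_rel F⟩

lemma phibar_mk (r : FreeAlgebra F (Fin 2)) :
    phibar F (RingQuot.mkAlgHom F (theRel F) r) = phi F r := by
  simp [phibar, RingQuot.liftAlgHom_mkAlgHom_apply]

/-! ### The quotient ring -/

noncomputable def XA : RingQuot (theRel F) := RingQuot.mkAlgHom F (theRel F) (genX F)
noncomputable def YA : RingQuot (theRel F) := RingQuot.mkAlgHom F (theRel F) (genY F)

lemma phibar_XA : phibar F (XA F) = XM F := by rw [XA, phibar_mk, phi_genX]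
lemma phibar_YA : phibar F (YA F) = YM F := by rw [YA, phibar_mk, phi_genY]

lemma relzero (a : FreeAlgebra F (Fin 2))
    (h : a = genX F * genY F ∨ a = genY F * genY F * genX F ∨ a = genY F * genX F * genX F ∨
     a = genX F * genX F * genX F ∨ a = genY F * genY F * genY F) :
    RingQuot.mkAlgHom F (theRel F) a = 0 := by
  have := RingQuot.mkAlgHom_rel (S := F) (s := theRel F) (x := a) (y := 0) ⟨rfl, h⟩
  simpa using this

lemma zXY : XA F * YA F = 0 := by
  have := relzero F (genX F * genY F) (Or.inl rfl)
  simpa [_root_.map_mul, XA, YA] using this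
lemma zYYX : YA F * YA F * XA F = 0 := by
  have := relzero F (genY F * genY F * genX F) (Or.inr (Or.inl rfl))
  simpa [_root_.map_mul, XA, YA] using this
lemma zYXX : YA F * XA F * XA F = 0 := by
  have := relzero F (genY F * genX F * genX F) (Or.inr (Or.inr (Or.inl rfl)))
  simpa [_root_.map_mul, XA, YA] using this
lemma zXXX : XA F * XA F * XA F = 0 := by
  have := relzero F (genX F * genX F * genX F) (Or.inr (Or.inr (Or.inr (Or.inl rfl))))
  simpa [_root_.map_mul, XA, YA] using this
lemma zYYY : YA F * YA F * YA F = 0 := by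
  have := relzero F (genY F * genY F * genY F) (Or.inr (Or.inr (Or.inr (Or.inr rfl))))
  simpa [_root_.map_mul, XA, YA] using this

-- derived zero products
lemma z1 : XA F * (XA F * XA F) = 0 := by rw [← mul_assoc]; exact zXXX F
lemma z2 : XA F * (YA F * YA F) = 0 := by rw [← mul_assoc, zXY, zero_mul]
lemma z3 : XA F * (YA F * XA F) = 0 := by rw [← mul_assoc, zXY, zero_mul]
lemma z4 : YA F * (XA F * XA F) = 0 := by rw [← mul_assoc]; exact zYXX F
lemma z5 : YA F * (YA F * YA F) = 0 := by rw [← mul_assoc]; exact zYYY F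
lemma z6 : YA F * (YA F * XA F) = 0 := by rw [← mul_assoc]; exact zYYX F
lemma z7 : XA F * XA F * XA F = 0 := zXXX F
lemma z8 : XA F * XA F * YA F = 0 := by rw [mul_assoc, zXY, mul_zero]
lemma z9 : YA F * YA F * XA F = 0 := zYYX F
lemma z10 : YA F * YA F * YA F = 0 := zYYY F
lemma z11 : YA F * XA F * XA F = 0 := zYXX F
lemma z12 : YA F * XA F * YA F = 0 := by rw [mul_assoc, zXY, mul_zero]
lemma w1 : XA F * XA F * (XA F * XA F) = 0 := by rw [← mul_assoc, z7, zero_mul]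
lemma w2 : XA F * XA F * (YA F * YA F) = 0 := by rw [← mul_assoc, z8, zero_mul]
lemma w3 : XA F * XA F * (YA F * XA F) = 0 := by rw [← mul_assoc, z8, zero_mul]
lemma w4 : YA F * YA F * (XA F * XA F) = 0 := by rw [← mul_assoc, z9, zero_mul]
lemma w5 : YA F * YA F * (YA F * YA F) = 0 := by rw [← mul_assoc, z10, zero_mul]
lemma w6 : YA F * YA F * (YA F * XA F) = 0 := by rw [← mul_assoc, z10, zero_mul]
lemma w7 : YA F * XA F * (XA F * XA F) = 0 := by rw [← mul_assoc, z11, zero_mul]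
lemma w8 : YA F * XA F * (YA F * YA F) = 0 := by rw [← mul_assoc, z12, zero_mul]
lemma w9 : YA F * XA F * (YA F * XA F) = 0 := by rw [← mul_assoc, z12, zero_mul]

/-- Normal form of elements of the quotient. -/
noncomputable def NF (c α β γ δ ε : F) : RingQuot (theRel F) :=
  c • 1 + α • XA F + β • YA F + γ • (XA F * XA F) + δ • (YA F * YA F) + ε • (YA F * XA F)

lemma NF_mul (c α β γ δ ε c' α' β' γ' δ' ε' : F) :
    NF F c α β γ δ ε * NF F c' α' β' γ' δ' ε' =
      NF F (c * c') (c * α' + α * c') (c * β' + β * c')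
        (c * γ' + γ * c' + α * α') (c * δ' + δ * c' + β * β')
        (c * ε' + ε * c' + β * α') := by
  simp only [NF, mul_add, add_mul, smul_mul_assoc, mul_smul_comm, one_mul, mul_one,
    zXY, z1, z2, z3, z4, z5, z6, z7, z8, z9, z10, z11, z12, w1, w2, w3, w4, w5, w6, w7, w8, w9,
    smul_zero, add_zero, zero_add]
  module

lemma NF_surj (a : RingQuot (theRel F)) : ∃ c α β γ δ ε : F, a = NF F c α β γ δ ε := by
  obtain ⟨r, rfl⟩ := RingQuot.mkAlgHom_surjective F (theRel F) a
  induction r using FreeAlgebra.induction with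
  | grade0 c =>
      exact ⟨c, 0, 0, 0, 0, 0, by simp [NF, Algebra.algebraMap_eq_smul_one,
        AlgHom.commutes]⟩
  | grade1 i =>
      fin_cases i
      · exact ⟨0, 1, 0, 0, 0, 0, by simp [NF, XA, genX]⟩
      · exact ⟨0, 0, 1, 0, 0, 0, by simp [NF, YA, genY]⟩
  | add x y hx hy =>
      obtain ⟨c, α, β, γ, δ, ε, h1⟩ := hx
      obtain ⟨c', α', β', γ', δ', ε', h2⟩ := hy
      refine ⟨c + c', α + α', β + β', γ + γ', δ + δ', ε + ε', ?_⟩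
      rw [map_add, h1, h2]; simp only [NF]; module
  | mul x y hx hy =>
      obtain ⟨c, α, β, γ, δ, ε, h1⟩ := hx
      obtain ⟨c', α', β', γ', δ', ε', h2⟩ := hy
      exact ⟨_, _, _, _, _, _, by rw [_root_.map_mul, h1, h2, NF_mul]⟩

lemma NF_sq (α β γ δ ε : F) :
    NF F 0 α β γ δ ε * NF F 0 α β γ δ ε = NF F 0 0 0 (α * α) (β * β) (β * α) := by
  rw [NF_mul]; congr 1 <;> ring

lemma NF_central (γ δ ε : F) (b : RingQuot (theRel F)) :
    b * NF F 0 0 0 γ δ ε = NF F 0 0 0 γ δ ε * b := by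
  obtain ⟨c', α', β', γ', δ', ε', rfl⟩ := NF_surj F b
  rw [NF_mul, NF_mul]; congr 1 <;> ring

lemma NF_central_rev (γ δ ε : F) : IsReversibleElem (NF F 0 0 0 γ δ ε) := by
  intro b
  rw [NF_central]

lemma NF_one : NF F 1 0 0 0 0 0 = 1 := by simp [NF]

lemma NF_unit (c α β γ δ ε : F) (hc : c ≠ 0) :
    ∃ u : RingQuot (theRel F), NF F c α β γ δ ε * u = 1 ∧ u * NF F c α β γ δ ε = 1 := by
  refine ⟨NF F c⁻¹ (-α / c ^ 2) (-β / c ^ 2) (α ^ 2 / c ^ 3 - γ / c ^ 2)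
    (β ^ 2 / c ^ 3 - δ / c ^ 2) (α * β / c ^ 3 - ε / c ^ 2), ?_, ?_⟩ <;>
    · rw [NF_mul, ← NF_one F]
      congr 1 <;> field_simp <;> ring

lemma phibar_NF2 (γ δ ε : F) :
    phibar F (NF F 0 0 0 γ δ ε) =
      γ • Matrix.single 3 0 (1:F) + δ • Matrix.single 4 0 (1:F)
        + ε • Matrix.single 5 0 (1:F) := by
  simp only [NF, zero_smul, zero_add, map_add, _root_.map_smul, _root_.map_mul,
    phibar_XA, phibar_YA, hXX, hYY, hYX]

lemma NF2_ne (γ δ ε : F) (h : γ ≠ 0 ∨ δ ≠ 0 ∨ ε ≠ 0) : NF F 0 0 0 γ δ ε ≠ 0 := by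
  intro h0
  have h2 := congrArg (phibar F) h0
  rw [map_zero, phibar_NF2] at h2
  have e43 : Matrix.single (4:Fin 6) 0 δ 3 0 = 0 := by apply Matrix.single_apply_of_ne; decide
  have e53 : Matrix.single (5:Fin 6) 0 ε 3 0 = 0 := by apply Matrix.single_apply_of_ne; decide
  have e34 : Matrix.single (3:Fin 6) 0 γ 4 0 = 0 := by apply Matrix.single_apply_of_ne; decide
  have e54 : Matrix.single (5:Fin 6) 0 ε 4 0 = 0 := by apply Matrix.single_apply_of_ne; decide
  have e35 : Matrix.single (3:Fin 6) 0 γ 5 0 = 0 := by apply Matrix.single_apply_of_ne; decide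
  have e45 : Matrix.single (4:Fin 6) 0 δ 5 0 = 0 := by apply Matrix.single_apply_of_ne; decide
  rcases h with h | h | h
  · have h3 := congrFun (congrFun h2 3) 0
    simp [Matrix.add_apply, Matrix.smul_apply, Matrix.single_apply_same, e43, e53] at h3
    exact h h3
  · have h3 := congrFun (congrFun h2 4) 0
    simp [Matrix.add_apply, Matrix.smul_apply, Matrix.single_apply_same, e34, e54] at h3
    exact h h3
  · have h3 := congrFun (congrFun h2 5) 0
    simp [Matrix.add_apply, Matrix.smul_apply, Matrix.single_apply_same, e35, e45] at h3
    exact h h3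

lemma unit_rev (a : RingQuot (theRel F)) (u : RingQuot (theRel F))
    (h1 : a * u = 1) (h2 : u * a = 1) : IsReversibleElem a := by
  intro b
  constructor
  · intro hb
    have : b = 0 := by
      calc b = b * (a * u) := by rw [h1, mul_one]
        _ = b * a * u := by rw [mul_assoc]
        _ = 0 := by rw [hb, zero_mul]
    rw [this, mul_zero]
  · intro hb
    have : b = 0 := by
      calc b = (u * a) * b := by rw [h2, one_mul]
        _ = u * (a * b) := by rw [mul_assoc]
        _ = 0 := by rw [hb, mul_zero]
    rw [this, zero_mul]

lemma weakRev : WeaklyReversible (RingQuot (theRel F)) := by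
  intro a ha
  obtain ⟨c, α, β, γ, δ, ε, rfl⟩ := NF_surj F a
  by_cases hc : c = 0
  · subst hc
    by_cases hαβ : α = 0 ∧ β = 0
    · obtain ⟨rfl, rfl⟩ := hαβ
      refine ⟨1, one_pos, by simpa using ha, ?_⟩
      rw [pow_one]
      have : NF F 0 0 0 γ δ ε = NF F (0:F) 0 0 γ δ ε := rfl
      exact NF_central_rev F γ δ ε
    · refine ⟨2, two_pos, ?_, ?_⟩
      · rw [pow_two, NF_sq]
        apply NF2_ne
        rcases not_and_or.mp hαβ with h | h
        · exact Or.inl (mul_ne_zero h h)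
        · exact Or.inr (Or.inl (mul_ne_zero h h))
      · rw [pow_two, NF_sq]
        exact NF_central_rev F _ _ _
  · obtain ⟨u, h1, h2⟩ := NF_unit F c α β γ δ ε hc
    exact ⟨1, one_pos, by simpa using ha, by rw [pow_one]; exact unit_rev F _ u h1 h2⟩

lemma mkRingHom_eq (r : FreeAlgebra F (Fin 2)) :
    RingQuot.mkRingHom (theRel F) r = RingQuot.mkAlgHom F (theRel F) r := by
  rw [← RingQuot.mkAlgHom_coe F (theRel F)]; rfl

end Aux

/-- Every reversible ring is weakly reversible, but the converse fails:
`R = F⟨x,y⟩/(xy, y²x, yx², x³, y³)` is weakly reversible while `xy = 0 ≠ yx` in `R`,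
so `R` is not reversible. -/
theorem stmt_19 (S : Type*) [Ring S] (F : Type*) [Field F] :
    (IsReversibleRing S → WeaklyReversible S) ∧
    WeaklyReversible (RingQuot (theRel F)) ∧
    RingQuot.mkRingHom (theRel F) (genX F) * RingQuot.mkRingHom (theRel F) (genY F) = 0 ∧
    RingQuot.mkRingHom (theRel F) (genY F) * RingQuot.mkRingHom (theRel F) (genX F) ≠ 0 := by
  refine ⟨?_, weakRev F, ?_, ?_⟩
  · intro h a ha
    exact ⟨1, one_pos, by simpa using ha,
      fun b => by rw [pow_one]; exact ⟨fun hb => h b a hb, fun hb => h a b hb⟩⟩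
  · rw [mkRingHom_eq, mkRingHom_eq]
    exact zXY F
  · rw [mkRingHom_eq, mkRingHom_eq]
    intro h0
    have h1 : YA F * XA F = NF F 0 0 0 0 0 1 := by simp [NF]
    exact NF2_ne F 0 0 1 (Or.inr (Or.inr one_ne_zero)) (h1 ▸ h0)
end
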